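/- arXiv:1912.00506 — 10 statements merged into one kernel-verified Lean document; each statement's English description precedes it below -/
import Mathlib

section
/- Let V be a finite-dimensional real vector space, and let X ⊆ V be a subset whose complement V \ X is convex. Then the function φ_X on closed convex polyhedral cones in V, defined by φ_X(K) = 1 if K is nonempty and K ⊆ X, and φ_X(K) = 0 otherwise, is a valuation: for all closed convex polyhedral cones K, K' with K ∪ K' also a closed convex polyhedral cone, φ_X(K ∪ K') + φ_X(K ∩ K') = φ_X(K) + φ_X(K'). -/
/-- A closed convex polyhedral cone: the set of nonnegative combinations of
finitely many vectors (possibly none, giving `{0}`). -/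
def IsPolyCone {V : Type*} [AddCommGroup V] [Module ℝ V] (K : Set V) : Prop :=
  ∃ (n : ℕ) (v : Fin n → V),
    K = {x | ∃ c : Fin n → ℝ, (∀ i, 0 ≤ c i) ∧ x = ∑ i, c i • v i}

/-!
If `K ⊆ X` or `K' ⊆ X`, the identity holds because all four cones contain `0`. Otherwise pick
`a ∈ K \ X` and `b ∈ K' \ X`. The segment `[a, b]` lies in the convex set `K ∪ K'`, so it is
covered by the closed sets `K` and `K'` and, being connected, meets `K ∩ K'`; convexity of `Xᶜ`
puts that point outside `X`, and all four terms vanish.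

Finitely generated cones are closed by conic Carathéodory: if the generators are linearly
dependent, the cone is the union of the cones on one generator fewer, and on linearly independent
generators it is the image of an orthant under a linear embedding.
-/

open Finset Set Topology

section Cone

variable {ι W : Type*} [AddCommGroup W] [Module ℝ W]

def coneOn (v : ι → W) (s : Finset ι) : Set W :=
  {x | ∃ c : ι → ℝ, (∀ i ∈ s, 0 ≤ c i) ∧ ∑ i ∈ s, c i • v i = x}

lemma coneOn_erase_subset [DecidableEq ι] (v : ι → W) (s : Finset ι) (j : ι) :
    coneOn v (s.erase j) ⊆ coneOn v s := by
  rintro _ ⟨c, hc, rfl⟩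
  refine ⟨Function.update c j 0, fun i hi => ?_, ?_⟩
  · rcases eq_or_ne i j with rfl | hij
    · simp
    · simpa [hij] using hc i (mem_erase.2 ⟨hij, hi⟩)
  · rw [← sum_erase s (by simp : Function.update c j 0 j • v j = 0)]
    exact sum_congr rfl fun i hi => by simp [ne_of_mem_erase hi]

/-- Subtracting from `c` the largest multiple of the relation `g` that keeps all coefficients
nonnegative kills one of them. -/
lemma exists_mem_coneOn_erase [DecidableEq ι] {v : ι → W} {s : Finset ι} {x : W}
    (hx : x ∈ coneOn v s) {g : ι → ℝ} (hg : ∑ i ∈ s, g i • v i = 0)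
    (hpos : ∃ i ∈ s, 0 < g i) : ∃ j ∈ s, x ∈ coneOn v (s.erase j) := by
  obtain ⟨c, hc, rfl⟩ := hx
  set P := s.filter (0 < g ·)
  have hP : P.Nonempty := by simpa [P, Finset.Nonempty] using hpos
  obtain ⟨j, hjP, hmin⟩ := P.exists_min_image (fun i => c i / g i) hP
  obtain ⟨hjs, hgj⟩ := mem_filter.1 hjP
  set t := c j / g j
  have ht : 0 ≤ t := div_nonneg (hc j hjs) hgj.le
  refine ⟨j, hjs, fun i => c i - t * g i, fun i hi => ?_, ?_⟩
  · have his := mem_of_mem_erase hi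
    by_cases hgi : 0 < g i
    · have := hmin i (mem_filter.2 ⟨his, hgi⟩)
      rw [le_div_iff₀ hgi] at this
      linarith
    · nlinarith [hc i his]
  · have hj : (c j - t * g j) • v j = 0 := by simp [t, div_mul_cancel₀ _ hgj.ne']
    rw [sum_erase s hj]
    simp only [sub_smul, mul_smul, sum_sub_distrib, ← smul_sum, hg, smul_zero, sub_zero]

lemma coneOn_eq_biUnion_erase [DecidableEq ι] {v : ι → W} {s : Finset ι}
    (hv : ¬LinearIndepOn ℝ v s) : coneOn v s = ⋃ j ∈ s, coneOn v (s.erase j) := by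
  obtain ⟨g, hg, i, his, hgi⟩ := not_linearIndepOn_finset_iff.1 hv
  refine Subset.antisymm (fun x hx => ?_) (iUnion₂_subset fun j _ => coneOn_erase_subset v s j)
  obtain ⟨j, hjs, hj⟩ : ∃ j ∈ s, x ∈ coneOn v (s.erase j) := by
    rcases hgi.lt_or_gt with hneg | hpos
    · exact exists_mem_coneOn_erase hx (g := -g) (by simp [neg_smul, hg]) ⟨i, his, by simpa⟩
    · exact exists_mem_coneOn_erase hx hg ⟨i, his, hpos⟩
  exact mem_biUnion hjs hj

variable [TopologicalSpace W] [IsTopologicalAddGroup W] [ContinuousSMul ℝ W] [T2Space W]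

lemma isClosed_coneOn_of_linearIndepOn {v : ι → W} {s : Finset ι} (hv : LinearIndepOn ℝ v s) :
    IsClosed (coneOn v s) := by
  classical
  let L := Fintype.linearCombination ℝ (fun i : s => v i)
  have hL : IsClosedEmbedding L := LinearMap.isClosedEmbedding_of_injective
    (LinearMap.ker_eq_bot.2 (linearIndependent_iff_injective_fintypeLinearCombination.1 hv))
  suffices coneOn v s = L '' Ici 0 from this ▸ hL.isClosedMap _ isClosed_Ici
  ext x
  simp only [coneOn, L, Fintype.linearCombination_apply, Set.mem_image, Set.mem_Ici]
  constructor
  · rintro ⟨c, hc, rfl⟩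
    exact ⟨fun i => c i, fun i => hc i i.2, sum_coe_sort s fun i => c i • v i⟩
  · rintro ⟨c, hc, rfl⟩
    refine ⟨fun i => if h : i ∈ s then c ⟨i, h⟩ else 0, fun i hi => by simpa [hi] using hc ⟨i, hi⟩,
      ?_⟩
    rw [← sum_coe_sort s]
    exact sum_congr rfl fun i _ => by simp

lemma isClosed_coneOn (v : ι → W) (s : Finset ι) : IsClosed (coneOn v s) := by
  classical
  induction s using Finset.strongInduction with
  | _ s ih =>
  by_cases hv : LinearIndepOn ℝ v s
  · exact isClosed_coneOn_of_linearIndepOn hv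
  · rw [coneOn_eq_biUnion_erase hv]
    exact isClosed_biUnion_finset fun j hj => ih _ (erase_ssubset hj)

end Cone

section PolyCone

variable {V W : Type*} [AddCommGroup V] [Module ℝ V] [AddCommGroup W] [Module ℝ W]

lemma IsPolyCone.zero_mem {K : Set V} (h : IsPolyCone K) : (0 : V) ∈ K := by
  obtain ⟨n, v, rfl⟩ := h
  exact ⟨0, fun _ => le_rfl, by simp⟩

lemma IsPolyCone.convex {K : Set V} (h : IsPolyCone K) : Convex ℝ K := by
  obtain ⟨n, v, rfl⟩ := h
  rintro _ ⟨c, hc, rfl⟩ _ ⟨d, hd, rfl⟩ p q hp hq _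
  refine ⟨p • c + q • d, fun i => add_nonneg (mul_nonneg hp (hc i)) (mul_nonneg hq (hd i)), ?_⟩
  simp [add_smul, mul_smul, smul_sum, sum_add_distrib]

lemma IsPolyCone.image {K : Set V} (h : IsPolyCone K) (f : V →ₗ[ℝ] W) : IsPolyCone (f '' K) := by
  obtain ⟨n, v, rfl⟩ := h
  refine ⟨n, f ∘ v, ?_⟩
  ext y
  constructor
  · rintro ⟨_, ⟨c, hc, rfl⟩, rfl⟩
    exact ⟨c, hc, by simp⟩
  · rintro ⟨c, hc, rfl⟩
    exact ⟨_, ⟨c, hc, rfl⟩, by simp⟩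

lemma IsPolyCone.isClosed [TopologicalSpace W] [IsTopologicalAddGroup W] [ContinuousSMul ℝ W]
    [T2Space W] {K : Set W} (h : IsPolyCone K) : IsClosed K := by
  obtain ⟨n, v, rfl⟩ := h
  convert isClosed_coneOn v univ using 1
  ext x
  simp [coneOn, eq_comm]

end PolyCone

lemma segment_inter_inter_nonempty_of_isClosed {E : Type*} [AddCommGroup E] [Module ℝ E]
    [TopologicalSpace E] [IsTopologicalAddGroup E] [ContinuousSMul ℝ E] {A B : Set E}
    (hA : IsClosed A) (hB : IsClosed B) (hAB : Convex ℝ (A ∪ B)) {a b : E} (ha : a ∈ A)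
    (hb : b ∈ B) :
    (segment ℝ a b ∩ (A ∩ B)).Nonempty :=
  isPreconnected_closed_iff.1 (convex_segment a b).isPreconnected A B hA hB
    (hAB.segment_subset (Or.inl ha) (Or.inr hb)) ⟨a, left_mem_segment ℝ a b, ha⟩
    ⟨b, right_mem_segment ℝ a b, hb⟩

lemma IsPolyCone.segment_inter_inter_nonempty {V : Type*} [AddCommGroup V] [Module ℝ V]
    [FiniteDimensional ℝ V] {K K' : Set V} (hK : IsPolyCone K) (hK' : IsPolyCone K')
    (hKK' : Convex ℝ (K ∪ K')) {a b : V} (ha : a ∈ K) (hb : b ∈ K') :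
    (segment ℝ a b ∩ (K ∩ K')).Nonempty := by
  -- `V` carries no topology, so pass to coordinates, where polyhedral cones are closed.
  let e := (Module.finBasis ℝ V).equivFun
  have h := segment_inter_inter_nonempty_of_isClosed ((hK.image e.toLinearMap).isClosed)
    ((hK'.image e.toLinearMap).isClosed)
    (by simpa [image_union] using hKK'.linear_image e.toLinearMap)
    (mem_image_of_mem e ha) (mem_image_of_mem e hb)
  have hseg : e '' segment ℝ a b = segment ℝ (e a) (e b) :=
    image_segment ℝ e.toLinearMap.toAffineMap a b
  simp only [LinearEquiv.coe_coe] at h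
  rw [← hseg, ← image_inter e.injective, ← image_inter e.injective] at h
  exact h.of_image

/-- if the complement of `X` is convex, then the indicator-type
function `φ_X` (equal to `1` on nonempty polyhedral cones contained in `X` and
`0` otherwise) is a valuation on closed convex polyhedral cones. -/
theorem stmt_0 {V : Type*} [AddCommGroup V] [Module ℝ V] [FiniteDimensional ℝ V]
    (X : Set V) (hX : Convex ℝ Xᶜ)
    (φ : Set V → ℤ)
    (hφ1 : ∀ K : Set V, K.Nonempty → K ⊆ X → φ K = 1)
    (hφ0 : ∀ K : Set V, ¬(K.Nonempty ∧ K ⊆ X) → φ K = 0)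
    (K K' : Set V) (hK : IsPolyCone K) (hK' : IsPolyCone K')
    (hU : IsPolyCone (K ∪ K')) :
    φ (K ∪ K') + φ (K ∩ K') = φ K + φ K' := by
  classical
  have hφ : ∀ L : Set V, (0 : V) ∈ L → φ L = if L ⊆ X then 1 else 0 := fun L hL => by
    split_ifs with h
    exacts [hφ1 L ⟨0, hL⟩ h, hφ0 L fun h' => h h'.2]
  rw [hφ _ (Or.inl hK.zero_mem), hφ _ (mem_inter hK.zero_mem hK'.zero_mem), hφ _ hK.zero_mem,
    hφ _ hK'.zero_mem]
  by_cases h : K ⊆ X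
  · simp [h, Set.union_subset_iff, inter_subset_left.trans h, add_comm]
  by_cases h' : K' ⊆ X
  · simp [h, h', Set.union_subset_iff, inter_subset_right.trans h']
  obtain ⟨a, ha, haX⟩ := not_subset.1 h
  obtain ⟨b, hb, hbX⟩ := not_subset.1 h'
  obtain ⟨z, hz, hzK⟩ := hK.segment_inter_inter_nonempty hK' hU.convex ha hb
  have hzX : z ∉ X := hX.segment_subset haX hbX hz
  simp [h, h', Set.union_subset_iff, not_subset.2 ⟨z, hzK, hzX⟩]
end

section
/- Let V be a finite-dimensional real vector space, K ⊆ V a closed convex polyhedral cone, F a closed face of K, and μ ∈ V^∨ a linear functional. If F ⊆ {x : μ(x) ≥ 0} but F is not contained in the hyperplane {x : μ(x) = 0}, then span(F) + K = span(F) + (K ∩ {x : μ(x) ≥ 0}). -/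
open scoped Pointwise

/-- A closed face of a cone `K`: the intersection of `K` with the kernel of a
linear functional that is nonnegative on `K` (taking `ℓ = 0` gives `K` itself). -/
def IsFaceOfCone {V : Type*} [AddCommGroup V] [Module ℝ V] (K F : Set V) : Prop :=
  ∃ ℓ : V →ₗ[ℝ] ℝ, (∀ x ∈ K, 0 ≤ ℓ x) ∧ F = {x ∈ K | ℓ x = 0}

/-- if a closed face `F` of a closed convex polyhedral cone `K` lies
in the closed half-space `{μ ≥ 0}` but not in the hyperplane `{μ = 0}`, then
`span F + K = span F + (K ∩ {μ ≥ 0})`. -/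
theorem stmt_1 {V : Type*} [AddCommGroup V] [Module ℝ V] [FiniteDimensional ℝ V]
    (K F : Set V) (hK : IsPolyCone K) (hF : IsFaceOfCone K F)
    (μ : V →ₗ[ℝ] ℝ)
    (h1 : F ⊆ {x | 0 ≤ μ x}) (h2 : ¬ F ⊆ {x | μ x = 0}) :
    (Submodule.span ℝ F : Set V) + K
      = (Submodule.span ℝ F : Set V) + (K ∩ {x | 0 ≤ μ x}) := by
  obtain ⟨n, v, hKdef⟩ := hK
  obtain ⟨ℓ, hℓ, hFdef⟩ := hF
  have hFK : F ⊆ K := by rw [hFdef]; exact fun x hx => hx.1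
  obtain ⟨x₀, hx₀F, hx₀⟩ : ∃ x₀ ∈ F, μ x₀ ≠ 0 := by
    by_contra h; push_neg at h; exact h2 h
  have hx₀pos : 0 < μ x₀ := lt_of_le_of_ne (h1 hx₀F) (Ne.symm hx₀)
  apply Set.Subset.antisymm
  · rintro z hz
    rw [Set.mem_add] at hz ⊢
    obtain ⟨s, hs, k, hk, rfl⟩ := hz
    set t : ℝ := max 0 (-(μ k) / μ x₀) with ht
    have ht0 : 0 ≤ t := le_max_left _ _
    have hμ : 0 ≤ μ (k + t • x₀) := by
      have h' : -(μ k) / μ x₀ ≤ t := le_max_right _ _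
      have : -(μ k) ≤ t * μ x₀ := by
        rw [div_le_iff₀ hx₀pos] at h'; linarith
      simp only [map_add, map_smul, smul_eq_mul]
      linarith
    have hKadd : k + t • x₀ ∈ K := by
      have hkK : k ∈ K := hk
      rw [hKdef] at hkK ⊢
      obtain ⟨c, hc, hck⟩ := hkK
      have hx₀K : x₀ ∈ K := hFK hx₀F
      rw [hKdef] at hx₀K
      obtain ⟨d, hd, hdx⟩ := hx₀K
      refine ⟨fun i => c i + t * d i, fun i => add_nonneg (hc i) (mul_nonneg ht0 (hd i)), ?_⟩
      rw [hck, hdx, Finset.smul_sum, ← Finset.sum_add_distrib]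
      congr 1; ext i
      rw [add_smul, smul_smul]
    have hspan : s - t • x₀ ∈ Submodule.span ℝ F :=
      Submodule.sub_mem _ hs (Submodule.smul_mem _ _ (Submodule.subset_span hx₀F))
    exact ⟨s - t • x₀, hspan, k + t • x₀, ⟨hKadd, hμ⟩, by abel⟩
  · exact Set.add_subset_add_left Set.inter_subset_left
end

section
/- Let V be a finite-dimensional real vector space, K ⊆ V a closed convex polyhedral cone, F a closed face of K, and μ ∈ V^∨. If F meets both open half-spaces {x : μ(x) > 0} and {x : μ(x) < 0}, then span(F) + K = span(F) + (K ∩ ker μ), and moreover span(F ∩ ker μ) + K = span(F) + K. -/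
open scoped Pointwise

/-!
Because `F` meets both sides of `ker μ`, every vector can be pushed into `ker μ` by adding a
nonnegative multiple of a point of `F ⊆ K`. Applied to `k ∈ K`, the added vector is absorbed by
`span F`, which gives the first identity. Applied to `f ∈ F`, it shows
`-f ∈ span (F ∩ ker μ) + K`; so `span F` lies in the lineality space of the cone
`span (F ∩ ker μ) + K`, which gives the second.
-/

section

variable {V : Type*} [AddCommGroup V] [Module ℝ V]

theorem IsPolyCone.exists_pointedCone {K : Set V} (hK : IsPolyCone K) :
    ∃ C : PointedCone ℝ V, (C : Set V) = K := by
  obtain ⟨n, v, rfl⟩ := hK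
  refine ⟨PointedCone.hull ℝ (Set.range v), Set.ext fun x => ?_⟩
  rw [SetLike.mem_coe, Submodule.mem_span_range_iff_exists_fun]
  constructor
  · rintro ⟨c, rfl⟩
    exact ⟨fun i => c i, fun i => (c i).2, rfl⟩
  · rintro ⟨c, hc, rfl⟩
    exact ⟨fun i => ⟨c i, hc i⟩, rfl⟩

theorem IsFaceOfCone.exists_pointedCone_le {C : PointedCone ℝ V} {F : Set V}
    (hF : IsFaceOfCone (C : Set V) F) : ∃ D : PointedCone ℝ V, D ≤ C ∧ (D : Set V) = F := by
  obtain ⟨ℓ, -, rfl⟩ := hF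
  exact ⟨C ⊓ PointedCone.ofSubmodule (LinearMap.ker ℓ), inf_le_left, rfl⟩

theorem exists_nonneg_add_smul_mem_ker {μ : V →ₗ[ℝ] ℝ} {x y : V} (hx : 0 < μ x) (hy : μ y < 0)
    (v : V) : ∃ z ∈ ({x, y} : Set V), ∃ t : ℝ, 0 ≤ t ∧ μ (v + t • z) = 0 := by
  rcases le_or_gt (μ v) 0 with hv | hv
  · refine ⟨x, .inl rfl, -μ v / μ x, div_nonneg (neg_nonneg.2 hv) hx.le, ?_⟩
    simp [hx.ne']
  · refine ⟨y, .inr rfl, -μ v / μ y, div_nonneg_of_nonpos (neg_nonpos.2 hv.le) hy.le, ?_⟩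
    simp [hy.ne]

namespace PointedCone

variable {μ : V →ₗ[ℝ] ℝ} {x y : V}

theorem submodule_add_eq_add_inter_ker (C : PointedCone ℝ V) (S : Submodule ℝ V)
    (hxC : x ∈ C) (hyC : y ∈ C) (hxS : x ∈ S) (hyS : y ∈ S) (hx : 0 < μ x) (hy : μ y < 0) :
    (S : Set V) + C = S + ((C : Set V) ∩ {z | μ z = 0}) := by
  refine subset_antisymm ?_ (Set.add_subset_add_left Set.inter_subset_left)
  rintro _ ⟨s, hs, k, hk, rfl⟩
  obtain ⟨z, hz, t, ht, hkz⟩ := exists_nonneg_add_smul_mem_ker hx hy k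
  have hzC : z ∈ C := by rcases hz with rfl | rfl <;> assumption
  have hzS : z ∈ S := by rcases hz with rfl | rfl <;> assumption
  exact ⟨s - t • z, S.sub_mem hs (S.smul_mem t hzS), k + t • z,
    ⟨C.add_mem hk (C.smul_mem ht hzC), hkz⟩, sub_add_add_cancel s k _⟩

theorem span_inter_ker_add_eq {C F : PointedCone ℝ V} (hFC : F ≤ C)
    (hxF : x ∈ F) (hyF : y ∈ F) (hx : 0 < μ x) (hy : μ y < 0) :
    (Submodule.span ℝ ((F : Set V) ∩ {z | μ z = 0}) : Set V) + C
      = (Submodule.span ℝ (F : Set V) : Set V) + C := by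
  set W := Submodule.span ℝ ((F : Set V) ∩ {z | μ z = 0})
  set P : PointedCone ℝ V := ofSubmodule W ⊔ C
  have hP : (P : Set V) = W + C := Submodule.coe_sup _ _
  have hspan : Submodule.span ℝ (F : Set V) ≤ P.lineal := by
    refine Submodule.span_le.2 fun f hf => mem_lineal.2 ⟨Submodule.mem_sup_right (hFC hf), ?_⟩
    obtain ⟨z, hz, t, ht, hfz⟩ := exists_nonneg_add_smul_mem_ker hx hy f
    have hzF : z ∈ F := by rcases hz with rfl | rfl <;> assumption
    have hW : f + t • z ∈ W := Submodule.subset_span ⟨F.add_mem hf (F.smul_mem ht hzF), hfz⟩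
    rw [show -f = -(f + t • z) + t • z by abel]
    exact Submodule.add_mem_sup (W.neg_mem hW) (C.smul_mem ht (hFC hzF))
  refine subset_antisymm
    (Set.add_subset_add_right (Submodule.span_mono Set.inter_subset_left)) ?_
  rw [← hP]
  rintro _ ⟨s, hs, k, hk, rfl⟩
  exact P.add_mem (P.lineal_le (hspan hs)) (Submodule.mem_sup_right hk)

end PointedCone

end

theorem stmt_2_general {V : Type*} [AddCommGroup V] [Module ℝ V]
    (K F : Set V) (hK : IsPolyCone K) (hF : IsFaceOfCone K F)
    (μ : V →ₗ[ℝ] ℝ)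
    (hpos : ∃ x ∈ F, 0 < μ x) (hneg : ∃ y ∈ F, μ y < 0) :
    (Submodule.span ℝ F : Set V) + K
        = (Submodule.span ℝ F : Set V) + (K ∩ {x | μ x = 0}) ∧
      (Submodule.span ℝ (F ∩ {x | μ x = 0}) : Set V) + K
        = (Submodule.span ℝ F : Set V) + K := by
  obtain ⟨C, rfl⟩ := hK.exists_pointedCone
  obtain ⟨D, hDC, rfl⟩ := hF.exists_pointedCone_le
  obtain ⟨x, hxD, hx⟩ := hpos
  obtain ⟨y, hyD, hy⟩ := hneg
  exact ⟨C.submodule_add_eq_add_inter_ker _ (hDC hxD) (hDC hyD) (Submodule.subset_span hxD)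
      (Submodule.subset_span hyD) hx hy,
    PointedCone.span_inter_ker_add_eq hDC hxD hyD hx hy⟩

/-- if a closed face `F` of a closed convex polyhedral cone `K`
meets both open half-spaces `{μ > 0}` and `{μ < 0}`, then
`span F + K = span F + (K ∩ ker μ)` and `span (F ∩ ker μ) + K = span F + K`. -/
theorem stmt_2 {V : Type*} [AddCommGroup V] [Module ℝ V] [FiniteDimensional ℝ V]
    (K F : Set V) (hK : IsPolyCone K) (hF : IsFaceOfCone K F)
    (μ : V →ₗ[ℝ] ℝ)
    (hpos : ∃ x ∈ F, 0 < μ x) (hneg : ∃ y ∈ F, μ y < 0) :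
    (Submodule.span ℝ F : Set V) + K
        = (Submodule.span ℝ F : Set V) + (K ∩ {x | μ x = 0}) ∧
      (Submodule.span ℝ (F ∩ {x | μ x = 0}) : Set V) + K
        = (Submodule.span ℝ F : Set V) + K :=
  stmt_2_general K F hK hF μ hpos hneg
end

section
/- Let Φ ⊂ V be a finite root system in a Euclidean space V (in the crystallographic sense), and let θ = (α₁,…,α_r) and θ' = (β₁,…,β_s) be tuples of pairwise orthogonal roots of Φ, all of the same length, such that no root of Φ is orthogonal to every α_i and no root is orthogonal to every β_j. Then there exists w in the Weyl group W of Φ such that {α₁,…,α_r} = {w(β₁),…,w(β_s)}; in particular r = s. -/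
open scoped InnerProductSpace

/-- The reflection across the hyperplane orthogonal to `α`. -/
noncomputable def preRefl {V : Type*} [NormedAddCommGroup V] [InnerProductSpace ℝ V]
    (α : V) : V → V :=
  fun x => x - (2 * ⟪α, x⟫_ℝ / ⟪α, α⟫_ℝ) • α

/-!
Induct on the number of entries of `a`. Two non-orthogonal roots of the same length are
Weyl-conjugate: if `⟪α, β⟫ > 0` and `β ≠ α`, integrality forces `β - α` to be a root, and the
reflection in `β - α` swaps `α` and `β`; if `⟪α, β⟫ < 0`, first reflect `β` to `-β`. So some `w`
in the Weyl group moves an entry of `b` onto `a 0`. The remaining entries of `a` and of `w b` are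
then maximal orthogonal tuples in the root system of roots orthogonal to `a 0`, whose Weyl group
fixes `a 0`.
-/

section

variable {V : Type*} [NormedAddCommGroup V] [InnerProductSpace ℝ V]

def weylGroup (Φ : Set V) : Subgroup (V ≃ₗᵢ[ℝ] V) :=
  Subgroup.closure {w | ∃ α ∈ Φ, ⇑w = preRefl α}

def orthogonalRoots (Φ : Set V) (v : V) : Set V := {γ ∈ Φ | ⟪γ, v⟫_ℝ = 0}

structure IsMaximalOrthogonalRoots (Φ : Set V) {r : ℕ} (a : Fin r → V) : Prop where
  mem : ∀ i, a i ∈ Φ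
  pairwise_inner_eq_zero : Pairwise fun i j => ⟪a i, a j⟫_ℝ = 0
  exists_inner_ne_zero : ∀ γ ∈ Φ, ∃ i, ⟪γ, a i⟫_ℝ ≠ 0

variable {Φ : Set V}

-- At `α = 0` both sides are the identity, the latter because `0 / 0 = 0`.
theorem coe_reflection_orthogonal_span_singleton (α : V) :
    ⇑(ℝ ∙ α)ᗮ.reflection = preRefl α := by
  funext x
  rw [Submodule.reflection_orthogonal_apply, Submodule.reflection_singleton_apply, preRefl,
    real_inner_self_eq_norm_sq]
  simp only [RCLike.ofReal_real_eq_id, id_eq]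
  match_scalars <;> ring

theorem reflection_mem_weylGroup {α : V} (hα : α ∈ Φ) :
    (ℝ ∙ α)ᗮ.reflection ∈ weylGroup Φ :=
  Subgroup.subset_closure ⟨α, hα, coe_reflection_orthogonal_span_singleton α⟩

theorem weylGroup_mono {Ψ : Set V} (h : Φ ⊆ Ψ) : weylGroup Φ ≤ weylGroup Ψ :=
  Subgroup.closure_mono fun _ ⟨α, hα, hw⟩ => ⟨α, h hα, hw⟩

theorem apply_mem_iff_of_mem_weylGroup (hrefl : ∀ α ∈ Φ, ∀ β ∈ Φ, preRefl α β ∈ Φ)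
    {w : V ≃ₗᵢ[ℝ] V} (hw : w ∈ weylGroup Φ) (γ : V) : w γ ∈ Φ ↔ γ ∈ Φ := by
  induction hw using Subgroup.closure_induction generalizing γ with
  | mem w hw =>
    obtain ⟨α, hα, hw⟩ := hw
    obtain rfl : w = (ℝ ∙ α)ᗮ.reflection :=
      DFunLike.coe_injective (hw.trans (coe_reflection_orthogonal_span_singleton α).symm)
    simp only [← coe_reflection_orthogonal_span_singleton] at hrefl
    exact ⟨fun h => by simpa using hrefl α hα _ h, hrefl α hα γ⟩
  | one => rfl
  | mul w w' _ _ ih ih' => rw [LinearIsometryEquiv.coe_mul, Function.comp_apply, ih, ih']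
  | inv w _ ih => rw [← ih, LinearIsometryEquiv.coe_inv, LinearIsometryEquiv.apply_symm_apply]

theorem apply_eq_self_of_mem_weylGroup {v : V} (hv : ∀ γ ∈ Φ, ⟪γ, v⟫_ℝ = 0)
    {w : V ≃ₗᵢ[ℝ] V} (hw : w ∈ weylGroup Φ) : w v = v := by
  induction hw using Subgroup.closure_induction with
  | mem w hw =>
    obtain ⟨α, hα, hw⟩ := hw
    simp [hw, preRefl, hv α hα]
  | one => rfl
  | mul w w' _ _ ih ih' => rw [LinearIsometryEquiv.coe_mul, Function.comp_apply, ih', ih]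
  | inv w _ ih => conv_lhs => rw [← ih]; exact w.symm_apply_apply v

theorem preRefl_mem_orthogonalRoots (hrefl : ∀ α ∈ Φ, ∀ β ∈ Φ, preRefl α β ∈ Φ)
    (v : V) : ∀ α ∈ orthogonalRoots Φ v, ∀ β ∈ orthogonalRoots Φ v,
      preRefl α β ∈ orthogonalRoots Φ v := fun α hα β hβ =>
  ⟨hrefl α hα.1 β hβ.1, by simp [preRefl, inner_sub_left, real_inner_smul_left, hα.2, hβ.2]⟩

theorem sub_mem_of_inner_pos (hrefl : ∀ α ∈ Φ, ∀ β ∈ Φ, preRefl α β ∈ Φ)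
    (hcrys : ∀ α ∈ Φ, ∀ β ∈ Φ, ∃ n : ℤ, 2 * ⟪α, β⟫_ℝ = n * ⟪α, α⟫_ℝ)
    {α β : V} (hα : α ∈ Φ) (hβ : β ∈ Φ) (hlen : ‖α‖ = ‖β‖) (hpos : 0 < ⟪α, β⟫_ℝ)
    (hne : β ≠ α) : β - α ∈ Φ := by
  obtain ⟨n, hn⟩ := hcrys α hα β hβ
  have hββ : ⟪β, β⟫_ℝ = ⟪α, α⟫_ℝ := by simp only [real_inner_self_eq_norm_sq, hlen]
  have hαα : 0 < ⟪α, α⟫_ℝ := real_inner_self_pos.2 (by rintro rfl; simp at hpos)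
  -- `‖β - α‖² = (2 - n) ‖α‖²` and `2 ⟪α, β⟫ = n ‖α‖²` leave only `n = 1`.
  have hsub : 0 < ⟪β - α, β - α⟫_ℝ := real_inner_self_pos.2 (sub_ne_zero.2 hne)
  rw [inner_sub_left, inner_sub_right, inner_sub_right, hββ, real_inner_comm α β] at hsub
  obtain rfl : n = 1 := by
    have h0 : (0 : ℝ) < n := pos_of_mul_pos_left (by linarith) hαα.le
    have h2 : (n : ℝ) < 2 := lt_of_mul_lt_mul_right (by linarith) hαα.le
    have : 0 < n ∧ n < 2 := ⟨by exact_mod_cast h0, by exact_mod_cast h2⟩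
    omega
  have h := hrefl α hα β hβ
  rwa [preRefl, hn, Int.cast_one, one_mul, div_self hαα.ne', one_smul] at h

theorem exists_mem_weylGroup_apply_eq_of_inner_pos
    (hrefl : ∀ α ∈ Φ, ∀ β ∈ Φ, preRefl α β ∈ Φ)
    (hcrys : ∀ α ∈ Φ, ∀ β ∈ Φ, ∃ n : ℤ, 2 * ⟪α, β⟫_ℝ = n * ⟪α, α⟫_ℝ)
    {α β : V} (hα : α ∈ Φ) (hβ : β ∈ Φ) (hlen : ‖α‖ = ‖β‖) (hpos : 0 < ⟪α, β⟫_ℝ) :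
    ∃ w ∈ weylGroup Φ, w β = α := by
  by_cases hne : β = α
  · exact ⟨1, one_mem _, hne⟩
  exact ⟨_, reflection_mem_weylGroup (sub_mem_of_inner_pos hrefl hcrys hα hβ hlen hpos hne),
    Submodule.reflection_sub hlen.symm⟩

theorem exists_mem_weylGroup_apply_eq_of_inner_ne_zero
    (hrefl : ∀ α ∈ Φ, ∀ β ∈ Φ, preRefl α β ∈ Φ)
    (hcrys : ∀ α ∈ Φ, ∀ β ∈ Φ, ∃ n : ℤ, 2 * ⟪α, β⟫_ℝ = n * ⟪α, α⟫_ℝ)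
    {α β : V} (hα : α ∈ Φ) (hβ : β ∈ Φ) (hlen : ‖α‖ = ‖β‖) (hne : ⟪α, β⟫_ℝ ≠ 0) :
    ∃ w ∈ weylGroup Φ, w β = α := by
  rcases hne.lt_or_gt with hneg | hpos
  · have hsβ := reflection_mem_weylGroup hβ
    have hnegβ : -β ∈ Φ := by
      rw [← Submodule.reflection_orthogonalComplement_singleton_eq_neg (𝕜 := ℝ),
        apply_mem_iff_of_mem_weylGroup hrefl hsβ]
      exact hβ
    obtain ⟨w, hw, hwβ⟩ := exists_mem_weylGroup_apply_eq_of_inner_pos hrefl hcrys hα hnegβ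
      (by rw [norm_neg, hlen]) (by rw [inner_neg_right]; linarith)
    refine ⟨w * (ℝ ∙ β)ᗮ.reflection, mul_mem hw hsβ, ?_⟩
    rw [LinearIsometryEquiv.coe_mul, Function.comp_apply,
      Submodule.reflection_orthogonalComplement_singleton_eq_neg, hwβ]
  · exact exists_mem_weylGroup_apply_eq_of_inner_pos hrefl hcrys hα hβ hlen hpos

namespace IsMaximalOrthogonalRoots

variable {r s : ℕ}

theorem eq_zero_iff {a : Fin r → V} (ha : IsMaximalOrthogonalRoots Φ a) : r = 0 ↔ Φ = ∅ := by
  refine ⟨?_, fun hΦ => ?_⟩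
  · rintro rfl
    exact Set.eq_empty_of_forall_notMem fun γ hγ => (ha.exists_inner_ne_zero γ hγ).choose.elim0
  · by_contra hr
    simpa [hΦ] using ha.mem ⟨0, Nat.pos_of_ne_zero hr⟩

theorem comp_equiv {b : Fin s → V} (hb : IsMaximalOrthogonalRoots Φ b) (σ : Fin s ≃ Fin s) :
    IsMaximalOrthogonalRoots Φ (b ∘ σ) where
  mem j := hb.mem (σ j)
  pairwise_inner_eq_zero _ _ hjk := hb.pairwise_inner_eq_zero (σ.injective.ne hjk)
  exists_inner_ne_zero γ hγ := by
    obtain ⟨j, hj⟩ := hb.exists_inner_ne_zero γ hγ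
    exact ⟨σ.symm j, by simpa using hj⟩

theorem map (hrefl : ∀ α ∈ Φ, ∀ β ∈ Φ, preRefl α β ∈ Φ) {b : Fin s → V}
    (hb : IsMaximalOrthogonalRoots Φ b) {w : V ≃ₗᵢ[ℝ] V} (hw : w ∈ weylGroup Φ) :
    IsMaximalOrthogonalRoots Φ (w ∘ b) where
  mem j := (apply_mem_iff_of_mem_weylGroup hrefl hw _).2 (hb.mem j)
  pairwise_inner_eq_zero _ _ hjk := by
    simpa using hb.pairwise_inner_eq_zero hjk
  exists_inner_ne_zero γ hγ := by
    have hγ' : w.symm γ ∈ Φ := by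
      rwa [← apply_mem_iff_of_mem_weylGroup hrefl hw, w.apply_symm_apply]
    obtain ⟨j, hj⟩ := hb.exists_inner_ne_zero _ hγ'
    exact ⟨j, by rwa [w.symm.inner_map_eq_flip, w.symm_symm] at hj⟩

theorem tail {a : Fin (r + 1) → V} (ha : IsMaximalOrthogonalRoots Φ a) :
    IsMaximalOrthogonalRoots (orthogonalRoots Φ (a 0)) (Fin.tail a) where
  mem i := ⟨ha.mem i.succ, ha.pairwise_inner_eq_zero (Fin.succ_ne_zero i)⟩
  pairwise_inner_eq_zero _ _ hij := ha.pairwise_inner_eq_zero ((Fin.succ_injective _).ne hij)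
  exists_inner_ne_zero γ hγ := by
    obtain ⟨i, hi⟩ := ha.exists_inner_ne_zero γ hγ.1
    obtain ⟨i, rfl⟩ := Fin.eq_succ_of_ne_zero (show i ≠ 0 by rintro rfl; exact hi hγ.2)
    exact ⟨i, hi⟩

theorem exists_mem_weylGroup_range_eq_image (hrefl : ∀ α ∈ Φ, ∀ β ∈ Φ, preRefl α β ∈ Φ)
    (hcrys : ∀ α ∈ Φ, ∀ β ∈ Φ, ∃ n : ℤ, 2 * ⟪α, β⟫_ℝ = n * ⟪α, α⟫_ℝ)
    {a : Fin r → V} {b : Fin s → V} (ha : IsMaximalOrthogonalRoots Φ a)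
    (hb : IsMaximalOrthogonalRoots Φ b) (hlen : ∀ i j, ‖a i‖ = ‖b j‖) :
    ∃ w ∈ weylGroup Φ, Set.range a = w '' Set.range b ∧ r = s := by
  induction r generalizing Φ s b with
  | zero =>
    obtain rfl := hb.eq_zero_iff.2 (ha.eq_zero_iff.1 rfl)
    exact ⟨1, one_mem _, by simp [Set.range_eq_empty], rfl⟩
  | succ r ih =>
    obtain ⟨s, rfl⟩ := Nat.exists_eq_succ_of_ne_zero
      (mt hb.eq_zero_iff.1 (mt ha.eq_zero_iff.2 r.succ_ne_zero))
    obtain ⟨j, hj⟩ := hb.exists_inner_ne_zero (a 0) (ha.mem 0)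
    obtain ⟨w, hw, hwb⟩ := exists_mem_weylGroup_apply_eq_of_inner_ne_zero hrefl hcrys
      (ha.mem 0) (hb.mem j) (hlen 0 j) hj
    set b' := w ∘ b ∘ Equiv.swap 0 j with hb'
    have hb'0 : b' 0 = a 0 := by simp [b', hwb]
    have hb'max : IsMaximalOrthogonalRoots (orthogonalRoots Φ (a 0)) (Fin.tail b') :=
      hb'0 ▸ ((hb.comp_equiv _).map hrefl hw).tail
    obtain ⟨w', hw', hrange, rfl⟩ := ih (preRefl_mem_orthogonalRoots hrefl (a 0))
      (fun α hα β hβ => hcrys α hα.1 β hβ.1) ha.tail hb'max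
      (fun i k => by simpa [b', Fin.tail] using hlen _ _)
    have hfix : w' (a 0) = a 0 := apply_eq_self_of_mem_weylGroup (fun γ hγ => hγ.2) hw'
    refine ⟨w' * w, mul_mem (weylGroup_mono (fun γ hγ => hγ.1) hw') hw, ?_, rfl⟩
    calc Set.range a = w' '' insert (b' 0) (Set.range (Fin.tail b')) := by
          rw [Fin.range_fin_succ a, Set.image_insert_eq, hb'0, hfix, hrange]
      _ = (w' * w) '' Set.range b := by
          rw [← Fin.range_fin_succ, hb', Set.range_comp, Set.range_comp,
            (Equiv.swap 0 j).surjective.range_eq, Set.image_univ, LinearIsometryEquiv.coe_mul,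
            Set.image_comp]

end IsMaximalOrthogonalRoots

end

theorem stmt_4_general {V : Type*} [NormedAddCommGroup V] [InnerProductSpace ℝ V]
    (Φ : Set V)
    (hrefl : ∀ α ∈ Φ, ∀ β ∈ Φ, preRefl α β ∈ Φ)
    (hcrys : ∀ α ∈ Φ, ∀ β ∈ Φ, ∃ n : ℤ, 2 * ⟪α, β⟫_ℝ = n * ⟪α, α⟫_ℝ)
    (W : Subgroup (V ≃ₗᵢ[ℝ] V))
    (hW : W = Subgroup.closure {w : V ≃ₗᵢ[ℝ] V | ∃ α ∈ Φ, ⇑w = preRefl α})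
    {r s : ℕ} (a : Fin r → V) (b : Fin s → V)
    (haΦ : ∀ i, a i ∈ Φ) (hbΦ : ∀ j, b j ∈ Φ)
    (haorth : ∀ i j, i ≠ j → ⟪a i, a j⟫_ℝ = 0)
    (hborth : ∀ i j, i ≠ j → ⟪b i, b j⟫_ℝ = 0)
    (hlen : ∀ i j, ‖a i‖ = ‖b j‖)
    (hafull : ∀ γ ∈ Φ, ∃ i, ⟪γ, a i⟫_ℝ ≠ 0)
    (hbfull : ∀ γ ∈ Φ, ∃ j, ⟪γ, b j⟫_ℝ ≠ 0) :
    ∃ w : V ≃ₗᵢ[ℝ] V, w ∈ W ∧ Set.range a = w '' Set.range b ∧ r = s := by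
  subst hW
  exact IsMaximalOrthogonalRoots.exists_mem_weylGroup_range_eq_image hrefl hcrys
    ⟨haΦ, haorth, hafull⟩ ⟨hbΦ, hborth, hbfull⟩ hlen

/-- in a finite (crystallographic, reduced) root system `Φ`, any two
maximal tuples of pairwise orthogonal roots of a common length (i.e. such that no
root is orthogonal to all entries) are conjugate under the Weyl group `W`; in
particular they have the same number of entries. -/
theorem stmt_4 {V : Type*} [NormedAddCommGroup V] [InnerProductSpace ℝ V]
    [FiniteDimensional ℝ V]
    (Φ : Set V) (hfin : Φ.Finite) (h0 : (0 : V) ∉ Φ)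
    (hred : ∀ α ∈ Φ, ∀ c : ℝ, c • α ∈ Φ → c = 1 ∨ c = -1)
    (hrefl : ∀ α ∈ Φ, ∀ β ∈ Φ, preRefl α β ∈ Φ)
    (hcrys : ∀ α ∈ Φ, ∀ β ∈ Φ, ∃ n : ℤ, 2 * ⟪α, β⟫_ℝ = n * ⟪α, α⟫_ℝ)
    (W : Subgroup (V ≃ₗᵢ[ℝ] V))
    (hW : W = Subgroup.closure {w : V ≃ₗᵢ[ℝ] V | ∃ α ∈ Φ, ⇑w = preRefl α})
    {r s : ℕ} (a : Fin r → V) (b : Fin s → V)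
    (haΦ : ∀ i, a i ∈ Φ) (hbΦ : ∀ j, b j ∈ Φ)
    (haorth : ∀ i j, i ≠ j → ⟪a i, a j⟫_ℝ = 0)
    (hborth : ∀ i j, i ≠ j → ⟪b i, b j⟫_ℝ = 0)
    (hlen : ∀ i j, ‖a i‖ = ‖b j‖)
    (hlena : ∀ i j, ‖a i‖ = ‖a j‖) (hlenb : ∀ i j, ‖b i‖ = ‖b j‖)
    (hafull : ∀ γ ∈ Φ, ∃ i, ⟪γ, a i⟫_ℝ ≠ 0)
    (hbfull : ∀ γ ∈ Φ, ∃ j, ⟪γ, b j⟫_ℝ ≠ 0) :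
    ∃ w : V ≃ₗᵢ[ℝ] V, w ∈ W ∧ Set.range a = w '' Set.range b ∧ r = s :=
  stmt_4_general Φ hrefl hcrys W hW a b haΦ hbΦ haorth hborth hlen hafull hbfull
end

section
/- Let (W,S) be a finite Coxeter system with canonical representation on V, Φ⁺ the positive pseudo-roots, and λ ∈ V a dominant vector. Let W_λ = {w ∈ W : (λ, w(x)) ≥ 0 for all x in the fundamental chamber B}. Then W_λ is a lower order ideal in W with respect to the strong Bruhat order: if w ∈ W_λ and z ≤ w in the Bruhat order, then z ∈ W_λ. -/
open scoped InnerProductSpace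

/-- with the canonical-representation setup of a finite Coxeter group
(normalized pseudo-root system `Φ` with positive system `Φp`, reflection group `W`,
length function and strong Bruhat order as below), for a dominant vector `λ` the
set `W_λ = {w ∈ W : (λ, w x) ≥ 0 for all x in the fundamental chamber}` is a lower
order ideal for the strong Bruhat order: if `w ∈ W_λ` and `z ≤ w` then `z ∈ W_λ`. -/
theorem stmt_6 {V : Type*} [NormedAddCommGroup V] [InnerProductSpace ℝ V]
    [FiniteDimensional ℝ V]
    (Φ Φp : Set V) (hfin : Φ.Finite)
    (hunit : ∀ α ∈ Φ, ‖α‖ = 1)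
    (hrefl : ∀ α ∈ Φ, ∀ β ∈ Φ, β - (2 * ⟪α, β⟫_ℝ) • α ∈ Φ)
    (hpos : Φ = Φp ∪ (-Φp)) (hdisj : Disjoint Φp (-Φp))
    (hchamber : ∃ x : V, ∀ α ∈ Φp, 0 < ⟪α, x⟫_ℝ)
    (W : Subgroup (V ≃ₗᵢ[ℝ] V))
    (hW : W = Subgroup.closure
      {w : V ≃ₗᵢ[ℝ] V | ∃ α ∈ Φ, ∀ x, w x = x - (2 * ⟪α, x⟫_ℝ) • α})
    (len : (V ≃ₗᵢ[ℝ] V) → ℕ)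
    (hlen : ∀ w : V ≃ₗᵢ[ℝ] V, len w = {α ∈ Φp | w α ∈ -Φp}.ncard)
    (bruhatLE : (V ≃ₗᵢ[ℝ] V) → (V ≃ₗᵢ[ℝ] V) → Prop)
    (hbruhat : ∀ z w, bruhatLE z w ↔ Relation.ReflTransGen
      (fun a b => (∃ α ∈ Φ, ∀ x, b x = a x - (2 * ⟪α, a x⟫_ℝ) • α) ∧
        len a + 1 = len b) z w)
    (lam : V) (hdom : ∀ α ∈ Φp, 0 ≤ ⟪lam, α⟫_ℝ)
    (z w : V ≃ₗᵢ[ℝ] V) (hz : z ∈ W) (hw : w ∈ W) (hzw : bruhatLE z w)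
    (hwlam : ∀ x : V, (∀ α ∈ Φp, 0 < ⟪x, α⟫_ℝ) → 0 ≤ ⟪lam, w x⟫_ℝ) :
    ∀ x : V, (∀ α ∈ Φp, 0 < ⟪x, α⟫_ℝ) → 0 ≤ ⟪lam, z x⟫_ℝ := by
  obtain ⟨x0, hx0⟩ := hchamber
  have hΦpΦ : Φp ⊆ Φ := by rw [hpos]; exact Set.subset_union_left
  have htricho : ∀ δ ∈ Φ, δ ∈ Φp ∨ -δ ∈ Φp := by
    intro δ hδ
    rw [hpos] at hδ
    rcases hδ with h | h
    · exact Or.inl h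
    · exact Or.inr (Set.mem_neg.mp h)
  have hnegx : ∀ δ : V, -δ ∈ Φp → ⟪δ, x0⟫_ℝ < 0 := by
    intro δ h
    have := hx0 _ h
    rw [inner_neg_left] at this
    linarith
  -- W (and inverses) preserve Φ
  have hWΦ : ∀ g ∈ W, (∀ β ∈ Φ, g β ∈ Φ) ∧ (∀ β ∈ Φ, g⁻¹ β ∈ Φ) := by
    rw [hW]
    intro g hg
    induction hg using Subgroup.closure_induction with
    | mem g hg =>
      obtain ⟨α, hα, hform⟩ := hg
      have h1 : ∀ β ∈ Φ, g β ∈ Φ := by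
        intro β hβ
        rw [hform]
        exact hrefl α hα β hβ
      refine ⟨h1, ?_⟩
      intro β hβ
      have hαα : ⟪α, α⟫_ℝ = 1 := by
        rw [real_inner_self_eq_norm_mul_norm, hunit α hα]; ring
      have hinv : g (g β) = β := by
        have hin : ⟪α, g β⟫_ℝ = -⟪α, β⟫_ℝ := by
          rw [hform]
          rw [inner_sub_right, real_inner_smul_right, hαα]; ring
        rw [hform (g β), hin, hform β]
        module
      have : g⁻¹ β = g β := by
        have := congrArg (fun v => g⁻¹ v) hinv
        simpa using this.symm
      rw [this]
      exact h1 β hβ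
    | one => simp
    | mul a b ha hb iha ihb =>
      refine ⟨fun β hβ => ?_, fun β hβ => ?_⟩
      · exact iha.1 _ (ihb.1 β hβ)
      · show (a * b)⁻¹ β ∈ Φ
        rw [mul_inv_rev]
        exact ihb.2 _ (iha.2 β hβ)
    | inv a ha iha =>
      refine ⟨iha.2, fun β hβ => ?_⟩
      rw [inv_inv]
      exact iha.1 β hβ
  -- key one-step lemma, with α assumed positive
  have key' : ∀ (a b : V ≃ₗᵢ[ℝ] V) (α : V), a ∈ W → α ∈ Φp →
      (∀ x, b x = a x - (2 * ⟪α, a x⟫_ℝ) • α) → len a + 1 = len b →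
      (∀ x : V, (∀ δ ∈ Φp, 0 < ⟪x, δ⟫_ℝ) → 0 ≤ ⟪lam, b x⟫_ℝ) →
      ∀ x : V, (∀ δ ∈ Φp, 0 < ⟪x, δ⟫_ℝ) → 0 ≤ ⟪lam, a x⟫_ℝ := by
    intro a b α haW hαp hform hl hQ x hx
    have hαΦ : α ∈ Φ := hΦpΦ hαp
    have hainv : a⁻¹ α ∈ Φ := (hWΦ a haW).2 α hαΦ
    have haa : a (a⁻¹ α) = α := by simp
    by_cases hc : a⁻¹ α ∈ Φp
    · -- positive case
      have h1 : ⟪α, a x⟫_ℝ = ⟪a⁻¹ α, x⟫_ℝ := by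
        conv_lhs => rw [← haa]
        exact LinearIsometryEquiv.inner_map_map a (a⁻¹ α) x
      have h2 : 0 < ⟪a⁻¹ α, x⟫_ℝ := by
        rw [real_inner_comm]; exact hx _ hc
      have h3 : 0 ≤ ⟪lam, α⟫_ℝ := hdom α hαp
      have h4 : 0 ≤ ⟪lam, b x⟫_ℝ := hQ x hx
      have h5 : ⟪lam, b x⟫_ℝ = ⟪lam, a x⟫_ℝ - 2 * ⟪α, a x⟫_ℝ * ⟪lam, α⟫_ℝ := by
        rw [hform, inner_sub_right, real_inner_smul_right]
      nlinarith [h1, h2, h3, h4, h5]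
    · -- contradiction case : length must decrease
      exfalso
      set γ : V := -(a⁻¹ α) with hγdef
      have hγp : γ ∈ Φp := (htricho _ hainv).resolve_left hc
      have hγΦ : γ ∈ Φ := hΦpΦ hγp
      have haγ : a γ = -α := by rw [hγdef, map_neg, haa]
      have hγγ : ⟪γ, γ⟫_ℝ = 1 := by
        rw [real_inner_self_eq_norm_mul_norm, hunit γ hγΦ]; ring
      set σ : V → V := fun v => v - (2 * ⟪γ, v⟫_ℝ) • γ with hσdef
      have hσΦ : ∀ β ∈ Φ, σ β ∈ Φ := fun β hβ => hrefl γ hγΦ β hβ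
      have hσσ : ∀ v, σ (σ v) = v := by
        intro v
        have hin : ⟪γ, σ v⟫_ℝ = -⟪γ, v⟫_ℝ := by
          rw [hσdef]
          simp only [inner_sub_right, real_inner_smul_right, hγγ]
          ring
        rw [hσdef]
        simp only []
        rw [hin]
        module
      have hσinj : Function.Injective σ := by
        intro u v h
        rw [← hσσ u, h, hσσ]
      have hbσ : ∀ β, b β = a (σ β) := by
        intro β
        have hin : ⟪α, a β⟫_ℝ = -⟪γ, β⟫_ℝ := by
          calc ⟪α, a β⟫_ℝ = ⟪-(a γ), a β⟫_ℝ := by rw [haγ]; rw [neg_neg]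
            _ = -⟪a γ, a β⟫_ℝ := by rw [inner_neg_left]
            _ = -⟪γ, β⟫_ℝ := by rw [LinearIsometryEquiv.inner_map_map]
        rw [hform, hin, hσdef]
        simp only [map_sub, map_smul, haγ]
        module
      -- inversion sets
      set A : Set V := {β | β ∈ Φp ∧ a β ∈ -Φp} with hA
      set B : Set V := {β | β ∈ Φp ∧ b β ∈ -Φp} with hB
      have hlenA : len a = A.ncard := hlen a
      have hlenB : len b = B.ncard := hlen b
      have hAfin : A.Finite := hfin.subset (fun β hβ => hΦpΦ hβ.1)
      have hBfin : B.Finite := hfin.subset (fun β hβ => hΦpΦ hβ.1)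
      set Pset : Set V := {β | σ β ∈ Φp} with hPset
      -- part 1 : σ '' (B ∩ Pset) = A ∩ Pset
      have himg : σ '' (B ∩ Pset) = A ∩ Pset := by
        ext δ
        constructor
        · rintro ⟨β, ⟨⟨hβp, hbβ⟩, hσβ⟩, rfl⟩
          refine ⟨⟨hσβ, ?_⟩, ?_⟩
          · rw [← hbσ]; exact hbβ
          · show σ (σ β) ∈ Φp
            rw [hσσ]; exact hβp
        · rintro ⟨⟨hδp, haδ⟩, hσδ⟩
          refine ⟨σ δ, ⟨⟨hσδ, ?_⟩, ?_⟩, hσσ δ⟩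
          · rw [hbσ, hσσ]; exact haδ
          · show σ (σ δ) ∈ Φp
            rw [hσσ]; exact hδp
      have hP : (B ∩ Pset).ncard = (A ∩ Pset).ncard := by
        rw [← himg, Set.ncard_image_of_injOn (hσinj.injOn)]
      -- part 2 : B ∩ Psetᶜ ⊆ A ∩ Psetᶜ
      have hQsub : B ∩ Psetᶜ ⊆ A ∩ Psetᶜ := by
        rintro β ⟨⟨hβp, hbβ⟩, hσβn⟩
        have hσβnot : σ β ∉ Φp := hσβn
        refine ⟨⟨hβp, ?_⟩, hσβn⟩
        have hβΦ : β ∈ Φ := hΦpΦ hβp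
        have hσβΦ : σ β ∈ Φ := hσΦ β hβΦ
        have hσβneg : -(σ β) ∈ Φp := (htricho _ hσβΦ).resolve_left hσβnot
        have haβΦ : a β ∈ Φ := (hWΦ a haW).1 β hβΦ
        by_contra hcon
        have haβp : a β ∈ Φp := by
          rcases htricho _ haβΦ with h | h
          · exact h
          · exact absurd (Set.mem_neg.mpr h) hcon
        -- derive contradiction via inner products with x0
        have e1 : β - σ β = (2 * ⟪γ, β⟫_ℝ) • γ := by
          rw [hσdef]; simp
        have e2 : ⟪β, x0⟫_ℝ - ⟪σ β, x0⟫_ℝ = 2 * ⟪γ, β⟫_ℝ * ⟪γ, x0⟫_ℝ := by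
          rw [← inner_sub_left, e1, real_inner_smul_left]
        have p1 : 0 < ⟪β, x0⟫_ℝ := hx0 _ hβp
        have p2 : ⟪σ β, x0⟫_ℝ < 0 := hnegx _ hσβneg
        have p3 : 0 < ⟪γ, x0⟫_ℝ := hx0 _ hγp
        have hγβ : 0 < ⟪γ, β⟫_ℝ := by nlinarith
        have e3 : a β - b β = -((2 * ⟪γ, β⟫_ℝ) • α) := by
          rw [hbσ, ← map_sub, e1, map_smul, haγ]
          module
        have e4 : ⟪a β, x0⟫_ℝ - ⟪b β, x0⟫_ℝ = -(2 * ⟪γ, β⟫_ℝ * ⟪α, x0⟫_ℝ) := by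
          rw [← inner_sub_left, e3, inner_neg_left, real_inner_smul_left]
        have p4 : 0 < ⟪a β, x0⟫_ℝ := hx0 _ haβp
        have p5 : ⟪b β, x0⟫_ℝ < 0 := hnegx _ (Set.mem_neg.mp hbβ)
        have p6 : 0 < ⟪α, x0⟫_ℝ := hx0 _ hαp
        nlinarith
      -- counting
      have hBsplit : B.ncard = (B ∩ Pset).ncard + (B ∩ Psetᶜ).ncard := by
        rw [← Set.ncard_union_eq (Set.disjoint_of_subset Set.inter_subset_right
            Set.inter_subset_right disjoint_compl_right)
            (hBfin.subset Set.inter_subset_left) (hBfin.subset Set.inter_subset_left),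
          Set.inter_union_compl]
      have hAsplit : A.ncard = (A ∩ Pset).ncard + (A ∩ Psetᶜ).ncard := by
        rw [← Set.ncard_union_eq (Set.disjoint_of_subset Set.inter_subset_right
            Set.inter_subset_right disjoint_compl_right)
            (hAfin.subset Set.inter_subset_left) (hAfin.subset Set.inter_subset_left),
          Set.inter_union_compl]
      have hmono : (B ∩ Psetᶜ).ncard ≤ (A ∩ Psetᶜ).ncard :=
        Set.ncard_le_ncard hQsub (hAfin.subset Set.inter_subset_left)
      have : len b ≤ len a := by
        rw [hlenA, hlenB, hBsplit, hAsplit, hP]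
        omega
      omega
  -- general one-step lemma
  have key : ∀ (a b : V ≃ₗᵢ[ℝ] V), a ∈ W →
      (∃ α ∈ Φ, ∀ x, b x = a x - (2 * ⟪α, a x⟫_ℝ) • α) → len a + 1 = len b →
      (∀ x : V, (∀ δ ∈ Φp, 0 < ⟪x, δ⟫_ℝ) → 0 ≤ ⟪lam, b x⟫_ℝ) →
      ∀ x : V, (∀ δ ∈ Φp, 0 < ⟪x, δ⟫_ℝ) → 0 ≤ ⟪lam, a x⟫_ℝ := by
    rintro a b haW ⟨α, hαΦ, hform⟩ hl hQ
    rcases htricho α hαΦ with h | h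
    · exact key' a b α haW h hform hl hQ
    · refine key' a b (-α) haW h ?_ hl hQ
      intro x
      rw [hform x]
      simp only [inner_neg_left, smul_neg, neg_smul, mul_neg, neg_neg]
  -- main induction along the Bruhat chain
  rw [hbruhat] at hzw
  have main : ∀ c, Relation.ReflTransGen
      (fun a b => (∃ α ∈ Φ, ∀ x, b x = a x - (2 * ⟪α, a x⟫_ℝ) • α) ∧
        len a + 1 = len b) z c →
      c ∈ W ∧ ((∀ x : V, (∀ δ ∈ Φp, 0 < ⟪x, δ⟫_ℝ) → 0 ≤ ⟪lam, c x⟫_ℝ) →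
        ∀ x : V, (∀ δ ∈ Φp, 0 < ⟪x, δ⟫_ℝ) → 0 ≤ ⟪lam, z x⟫_ℝ) := by
    intro c hchain
    induction hchain with
    | refl => exact ⟨hz, fun h => h⟩
    | @tail b c hzb hbc' ih =>
      obtain ⟨⟨α, hαΦ, hform⟩, hlbc⟩ := hbc'
      have hbW : b ∈ W := ih.1
      have hgen : c * b⁻¹ ∈ W := by
        rw [hW]
        apply Subgroup.subset_closure
        refine ⟨α, hαΦ, fun x => ?_⟩
        have := hform (b⁻¹ x)
        simpa using this
      have hcW : c ∈ W := by
        have := mul_mem hgen hbW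
        rwa [inv_mul_cancel_right] at this
      refine ⟨hcW, fun hQc => ih.2 (key b c hbW ⟨α, hαΦ, hform⟩ hlbc hQc)⟩
  exact (main w hzw).2 hwlam
end

section
/- Let 𝓗 = (H_{α_e})_{e∈E} be a finite central hyperplane arrangement on V with face poset 𝓛, and let C ∈ 𝓛 be a face. Let E(C) = {e ∈ E : C ⊆ H_{α_e}} and let 𝓗(C) be the subarrangement (H_{α_e})_{e∈E(C)}. Then every face D of 𝓛 with C ≤ D is contained in a unique face D' of 𝓗(C), and the map D ↦ D' is an order isomorphism from the star 𝓛_{≥C} = {D ∈ 𝓛 : C ≤ D} onto the face poset of 𝓗(C). Moreover this isomorphism preserves dimension: dim D' = dim D. -/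
open scoped InnerProductSpace

/-- The face of the central hyperplane arrangement `(H_{α_e})_{e ∈ E}` containing
the point `x`: the set of points with the same sign vector as `x`. -/
noncomputable def faceOf {V : Type*} [NormedAddCommGroup V] [InnerProductSpace ℝ V]
    {E : Type*} (α : E → V) (x : V) : Set V :=
  {y | ∀ e, SignType.sign ⟪α e, y⟫_ℝ = SignType.sign ⟪α e, x⟫_ℝ}

/-- Faces of the arrangement. -/
def IsFace {V : Type*} [NormedAddCommGroup V] [InnerProductSpace ℝ V]
    {E : Type*} (α : E → V) (C : Set V) : Prop :=
  ∃ x, C = faceOf α x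

open Filter Topology

section helpers

variable {V : Type*} [NormedAddCommGroup V] [InnerProductSpace ℝ V] {E : Type*}

lemma mem_faceOf_self (α : E → V) (x : V) : x ∈ faceOf α x := fun _ => rfl

lemma faceOf_eq_of_mem {α : E → V} {x y : V} (h : y ∈ faceOf α x) :
    faceOf α y = faceOf α x := by
  ext z
  exact forall_congr' fun e => by rw [h e]

lemma sign_combo {a b t : ℝ} (h : a = 0 ∨ SignType.sign a = SignType.sign b)
    (ht0 : 0 < t) (ht1 : t < 1) : SignType.sign (a + t * (b - a)) = SignType.sign b := by
  rcases lt_trichotomy b 0 with hb | hb | hb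
  · rw [sign_neg hb]
    have ha : a ≤ 0 := by
      rcases h with h | h
      · exact h.le
      · rw [sign_neg hb, sign_eq_neg_one_iff] at h; exact h.le
    exact sign_neg (by nlinarith)
  · subst hb
    have ha : a = 0 := by
      rcases h with h | h
      · exact h
      · rwa [sign_zero, sign_eq_zero_iff] at h
    simp [ha]
  · rw [sign_pos hb]
    have ha : 0 ≤ a := by
      rcases h with h | h
      · exact h.ge
      · rw [sign_pos hb, sign_eq_one_iff] at h; exact h.le
    exact sign_pos (by nlinarith)

lemma sign_add_mul_same {a b ε : ℝ} (h : SignType.sign b = SignType.sign a) (hε : 0 < ε) :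
    SignType.sign (a + ε * b) = SignType.sign a := by
  rcases lt_trichotomy a 0 with ha | ha | ha
  · have hb : b < 0 := by rw [sign_neg ha, sign_eq_neg_one_iff] at h; exact h
    have := mul_neg_of_pos_of_neg hε hb
    rw [sign_neg (show a + ε * b < 0 by linarith), sign_neg ha]
  · subst ha
    have hb : b = 0 := by rwa [sign_zero, sign_eq_zero_iff] at h
    simp [hb]
  · have hb : 0 < b := by rw [sign_pos ha, sign_eq_one_iff] at h; exact h
    have := mul_pos hε hb
    rw [sign_pos (show 0 < a + ε * b by linarith), sign_pos ha]

lemma eventually_sign_add_mul {a : ℝ} (b : ℝ) (ha : a ≠ 0) :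
    ∀ᶠ ε in 𝓝[>] (0:ℝ), SignType.sign (a + ε * b) = SignType.sign a := by
  have hcont : Tendsto (fun ε : ℝ => a + ε * b) (𝓝[>] 0) (𝓝 a) := by
    have : Tendsto (fun ε : ℝ => a + ε * b) (𝓝 0) (𝓝 (a + 0 * b)) := by
      exact (continuous_const.add (continuous_id.mul continuous_const)).tendsto 0
    simpa using this.mono_left nhdsWithin_le_nhds
  rcases ha.lt_or_gt with ha' | ha'
  · filter_upwards [hcont.eventually (eventually_lt_nhds ha')] with ε hε
    rw [sign_neg hε, sign_neg ha']
  · filter_upwards [hcont.eventually (eventually_gt_nhds ha')] with ε hε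
    rw [sign_pos hε, sign_pos ha']

lemma sign_mul_pos {ε b : ℝ} (hε : 0 < ε) : SignType.sign (ε * b) = SignType.sign b := by
  rw [sign_mul, sign_pos hε, one_mul]

lemma closure_faceOf (α : E → V) (x : V) :
    closure (faceOf α x) =
      {y | ∀ e, ⟪α e, y⟫_ℝ = 0 ∨ SignType.sign ⟪α e, y⟫_ℝ = SignType.sign ⟪α e, x⟫_ℝ} := by
  apply Set.Subset.antisymm
  · apply closure_minimal
    · intro y hy e; exact Or.inr (hy e)
    · have : {y : V | ∀ e, ⟪α e, y⟫_ℝ = 0 ∨ SignType.sign ⟪α e, y⟫_ℝ = SignType.sign ⟪α e, x⟫_ℝ}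
          = ⋂ e, (fun y => ⟪α e, y⟫_ℝ) ⁻¹' {t | t = 0 ∨ SignType.sign t = SignType.sign ⟪α e, x⟫_ℝ} := by
        ext y; simp [Set.mem_iInter]
      rw [this]
      refine isClosed_iInter fun e => IsClosed.preimage (continuous_const.inner continuous_id) ?_
      rcases lt_trichotomy (⟪α e, x⟫_ℝ) 0 with hx | hx | hx
      · have : {t : ℝ | t = 0 ∨ SignType.sign t = SignType.sign ⟪α e, x⟫_ℝ} = Set.Iic 0 := by
          ext t
          simp only [Set.mem_setOf_eq, sign_neg hx, sign_eq_neg_one_iff, Set.mem_Iic]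
          exact ⟨fun h => h.elim le_of_eq le_of_lt, fun h => h.lt_or_eq.symm⟩
        rw [this]; exact isClosed_Iic
      · have : {t : ℝ | t = 0 ∨ SignType.sign t = SignType.sign ⟪α e, x⟫_ℝ} = {0} := by
          ext t; simp only [Set.mem_setOf_eq, hx, sign_zero, sign_eq_zero_iff, Set.mem_singleton_iff, or_self]
        rw [this]; exact isClosed_singleton
      · have : {t : ℝ | t = 0 ∨ SignType.sign t = SignType.sign ⟪α e, x⟫_ℝ} = Set.Ici 0 := by
          ext t
          simp only [Set.mem_setOf_eq, sign_pos hx, sign_eq_one_iff, Set.mem_Ici]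
          exact ⟨fun h => h.elim (fun h => le_of_eq h.symm) le_of_lt,
            fun h => h.lt_or_eq.symm.imp Eq.symm id⟩
        rw [this]; exact isClosed_Ici
  · intro y hy
    have htend : Tendsto (fun t : ℝ => y + t • (x - y)) (𝓝[>] 0) (𝓝 y) := by
      have : Tendsto (fun t : ℝ => y + t • (x - y)) (𝓝 0) (𝓝 (y + (0:ℝ) • (x - y))) :=
        (continuous_const.add (continuous_id.smul continuous_const)).tendsto 0
      simpa using this.mono_left nhdsWithin_le_nhds
    refine mem_closure_of_tendsto htend ?_
    filter_upwards [Ioo_mem_nhdsGT_of_mem (Set.left_mem_Ico.2 one_pos)] with t ht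
    intro e
    have : ⟪α e, y + t • (x - y)⟫_ℝ = ⟪α e, y⟫_ℝ + t * (⟪α e, x⟫_ℝ - ⟪α e, y⟫_ℝ) := by
      rw [inner_add_right, real_inner_smul_right, inner_sub_right]
    rw [this]
    exact sign_combo (hy e) ht.1 ht.2

end helpers

/-- Lemma on the star of a face: let `C` be a face of the arrangement
`(H_{α_e})_{e ∈ E}` and let `𝓗(C)` be the subarrangement indexed by
`E(C) = {e : C ⊆ H_{α_e}}`.  Then every face `D ≥ C` is contained in a unique face
`D'` of `𝓗(C)`; the resulting map is an order isomorphism from the star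
`𝓛_{≥C}` onto the face poset of `𝓗(C)` (order-embedding and surjectivity below),
and it preserves dimension. -/
theorem stmt_9 {V : Type*} [NormedAddCommGroup V] [InnerProductSpace ℝ V]
    [FiniteDimensional ℝ V] {E : Type*} [Fintype E]
    (α : E → V) (C : Set V) (hC : IsFace α C) :
    (∀ D : Set V, IsFace α D → C ⊆ closure D →
      ∃! D' : Set V,
        IsFace (fun e : {e : E // ∀ x ∈ C, ⟪α e, x⟫_ℝ = 0} => α e.1) D' ∧ D ⊆ D') ∧
    (∀ D₁ D₂ D₁' D₂' : Set V,
      IsFace α D₁ → C ⊆ closure D₁ → IsFace α D₂ → C ⊆ closure D₂ →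
      IsFace (fun e : {e : E // ∀ x ∈ C, ⟪α e, x⟫_ℝ = 0} => α e.1) D₁' → D₁ ⊆ D₁' →
      IsFace (fun e : {e : E // ∀ x ∈ C, ⟪α e, x⟫_ℝ = 0} => α e.1) D₂' → D₂ ⊆ D₂' →
      (D₁ ⊆ closure D₂ ↔ D₁' ⊆ closure D₂')) ∧
    (∀ D' : Set V, IsFace (fun e : {e : E // ∀ x ∈ C, ⟪α e, x⟫_ℝ = 0} => α e.1) D' →
      ∃ D : Set V, IsFace α D ∧ C ⊆ closure D ∧ D ⊆ D') ∧
    (∀ D D' : Set V, IsFace α D → C ⊆ closure D →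
      IsFace (fun e : {e : E // ∀ x ∈ C, ⟪α e, x⟫_ℝ = 0} => α e.1) D' → D ⊆ D' →
      Set.finrank ℝ D' = Set.finrank ℝ D) := by
  obtain ⟨c, rfl⟩ := hC
  set α' : {e : E // ∀ x ∈ faceOf α c, ⟪α e, x⟫_ℝ = 0} → V := fun e => α e.1 with hα'
  have hc : c ∈ faceOf α c := mem_faceOf_self α c
  -- e ∈ E(C) iff ⟪α e, c⟫ = 0
  have hE : ∀ e : E, (∀ x ∈ faceOf α c, ⟪α e, x⟫_ℝ = 0) ↔ ⟪α e, c⟫_ℝ = 0 := by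
    intro e
    constructor
    · intro h; exact h c hc
    · intro h x hx
      have := hx e
      rw [h, sign_zero, sign_eq_zero_iff] at this
      exact this
  refine ⟨?_, ?_, ?_, ?_⟩
  · -- existence and uniqueness of D'
    rintro D ⟨d, rfl⟩ hCD
    refine ⟨faceOf α' d, ⟨⟨d, rfl⟩, fun y hy e => hy e.1⟩, ?_⟩
    rintro D'' ⟨⟨z, rfl⟩, hsub⟩
    exact (faceOf_eq_of_mem (hsub (mem_faceOf_self α d))).symm
  · -- order embedding
    rintro D₁ D₂ D₁' D₂' ⟨d₁, rfl⟩ h₁ ⟨d₂, rfl⟩ h₂ ⟨z₁, rfl⟩ hs₁ ⟨z₂, rfl⟩ hs₂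
    have e₁ : faceOf α' z₁ = faceOf α' d₁ :=
      (faceOf_eq_of_mem (hs₁ (mem_faceOf_self α d₁))).symm
    have e₂ : faceOf α' z₂ = faceOf α' d₂ :=
      (faceOf_eq_of_mem (hs₂ (mem_faceOf_self α d₂))).symm
    rw [e₁, e₂, closure_faceOf, closure_faceOf]
    rw [closure_faceOf] at h₁ h₂
    have hc₁ := h₁ hc
    have hc₂ := h₂ hc
    constructor
    · intro h y hy e
      rcases h (mem_faceOf_self α d₁) e.1 with h0 | hs
      · left
        have := hy e
        rw [h0, sign_zero, sign_eq_zero_iff] at this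
        exact this
      · right; rw [hy e]; exact hs
    · intro h y hy e
      by_cases hce : ⟪α e, c⟫_ℝ = 0
      · rcases h (fun e' => mem_faceOf_self α d₁ e'.1) ⟨e, (hE e).2 hce⟩ with h0 | hs
        · left
          have := hy e
          rw [show ⟪α' ⟨e, (hE e).2 hce⟩, d₁⟫_ℝ = ⟪α e, d₁⟫_ℝ from rfl] at h0
          rw [h0, sign_zero, sign_eq_zero_iff] at this
          exact this
        · right; rw [hy e]; exact hs
      · right
        have hd₁ : SignType.sign ⟪α e, c⟫_ℝ = SignType.sign ⟪α e, d₁⟫_ℝ :=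
          (hc₁ e).resolve_left hce
        have hd₂ : SignType.sign ⟪α e, c⟫_ℝ = SignType.sign ⟪α e, d₂⟫_ℝ :=
          (hc₂ e).resolve_left hce
        rw [hy e, ← hd₁, hd₂]
  · -- surjectivity
    rintro D' ⟨z, rfl⟩
    have hev : ∀ᶠ ε in 𝓝[>] (0:ℝ), ∀ e : E,
        (⟪α e, c⟫_ℝ = 0 → SignType.sign (⟪α e, c⟫_ℝ + ε * ⟪α e, z⟫_ℝ) = SignType.sign ⟪α e, z⟫_ℝ) ∧
        (⟪α e, c⟫_ℝ ≠ 0 → SignType.sign (⟪α e, c⟫_ℝ + ε * ⟪α e, z⟫_ℝ) = SignType.sign ⟪α e, c⟫_ℝ) := by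
      rw [eventually_all]
      intro e
      by_cases h : ⟪α e, c⟫_ℝ = 0
      · filter_upwards [self_mem_nhdsWithin] with ε hε
        refine ⟨fun _ => ?_, fun hne => absurd h hne⟩
        rw [h, zero_add, sign_mul_pos hε]
      · filter_upwards [eventually_sign_add_mul ⟪α e, z⟫_ℝ h] with ε hε
        exact ⟨fun h0 => absurd h0 h, fun _ => hε⟩
    obtain ⟨ε, hε, hεpos⟩ := (hev.and self_mem_nhdsWithin).exists
    have hεpos : (0:ℝ) < ε := hεpos
    have hinner : ∀ e : E, ⟪α e, c + ε • z⟫_ℝ = ⟪α e, c⟫_ℝ + ε * ⟪α e, z⟫_ℝ := by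
      intro e; rw [inner_add_right, real_inner_smul_right]
    refine ⟨faceOf α (c + ε • z), ⟨c + ε • z, rfl⟩, ?_, ?_⟩
    · rw [closure_faceOf]
      intro y hy e
      by_cases h : ⟪α e, c⟫_ℝ = 0
      · left
        have := hy e
        rw [h, sign_zero, sign_eq_zero_iff] at this
        exact this
      · right
        rw [hy e, hinner e, (hε e).2 h]
    · intro y hy e
      have hce : ⟪α e.1, c⟫_ℝ = 0 := (hE e.1).1 e.2
      have := hy e.1
      rw [hinner e.1, (hε e.1).1 hce] at this
      exact this
  · -- dimension preservation
    rintro D D' ⟨d, rfl⟩ hCD ⟨z, rfl⟩ hsub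
    have hD' : faceOf α' z = faceOf α' d :=
      (faceOf_eq_of_mem (hsub (mem_faceOf_self α d))).symm
    rw [hD']
    rw [closure_faceOf] at hCD
    have hcomp := hCD hc
    have hspan : Submodule.span ℝ (faceOf α' d) = Submodule.span ℝ (faceOf α d) := by
      apply le_antisymm
      · rw [Submodule.span_le]
        intro y hy
        have hev : ∀ᶠ ε in 𝓝[>] (0:ℝ), ∀ e : E,
            SignType.sign (⟪α e, d⟫_ℝ + ε * ⟪α e, y⟫_ℝ) = SignType.sign ⟪α e, d⟫_ℝ := by
          rw [eventually_all]
          intro e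
          by_cases h : ⟪α e, c⟫_ℝ = 0
          · filter_upwards [self_mem_nhdsWithin] with ε hε
            exact sign_add_mul_same (hy ⟨e, (hE e).2 h⟩) hε
          · have hd : ⟪α e, d⟫_ℝ ≠ 0 := by
              have hs : SignType.sign ⟪α e, c⟫_ℝ = SignType.sign ⟪α e, d⟫_ℝ :=
                (hcomp e).resolve_left h
              intro h0
              rw [h0, sign_zero, sign_eq_zero_iff] at hs
              exact h hs
            exact eventually_sign_add_mul _ hd
        obtain ⟨ε, hε, hεpos⟩ := (hev.and self_mem_nhdsWithin).exists
        have hεpos : (0:ℝ) < ε := hεpos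
        have hmem : d + ε • y ∈ faceOf α d := by
          intro e
          rw [inner_add_right, real_inner_smul_right]
          exact hε e
        have h1 : d ∈ Submodule.span ℝ (faceOf α d) :=
          Submodule.subset_span (mem_faceOf_self α d)
        have h2 : d + ε • y ∈ Submodule.span ℝ (faceOf α d) := Submodule.subset_span hmem
        have h3 : ε • y ∈ Submodule.span ℝ (faceOf α d) := by
          have := Submodule.sub_mem _ h2 h1
          rwa [add_sub_cancel_left] at this
        have h4 := Submodule.smul_mem _ ε⁻¹ h3
        rwa [smul_smul, inv_mul_cancel₀ hεpos.ne', one_smul] at h4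
      · exact Submodule.span_mono (fun y hy e => hy e.1)
    unfold Set.finrank
    rw [hspan]
end

section
/- Let 𝓗 be a finite central hyperplane arrangement on V with face poset 𝓛 and chambers 𝓣, let C₀ be a chamber, and let C, D be faces with D ≤ C. For any point x ∈ C₀, the following are equivalent: (a) x ∈ closure(C) + span(D); (c) D ∘ C₀ ≤ C. Moreover, since C₀ is a chamber, these can hold only when C is a chamber, and then they are equivalent to D ∘ C₀ = C. -/
open scoped InnerProductSpace Pointwise
open Classical

/-- The sign vector of a point `x` with respect to the central hyperplane
arrangement `(H_{α_e})_{e ∈ E}`. -/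
noncomputable def signVec {V : Type*} [NormedAddCommGroup V] [InnerProductSpace ℝ V]
    {E : Type*} (α : E → V) (x : V) : E → SignType :=
  fun e => SignType.sign ⟪α e, x⟫_ℝ

/-- The face of the arrangement with sign vector `σ`. -/
noncomputable def faceVecSet {V : Type*} [NormedAddCommGroup V] [InnerProductSpace ℝ V]
    {E : Type*} (α : E → V) (σ : E → SignType) : Set V :=
  {y | signVec α y = σ}

/-- A sign vector is (the sign vector of) a face iff it is realized by some point. -/
def IsFaceVec {V : Type*} [NormedAddCommGroup V] [InnerProductSpace ℝ V]
    {E : Type*} (α : E → V) (σ : E → SignType) : Prop :=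
  ∃ x : V, signVec α x = σ

/-- The face order on sign vectors. -/
def vLE {E : Type*} (σ τ : E → SignType) : Prop :=
  ∀ e, σ e = 0 ∨ σ e = τ e

/-- Composition of faces (on sign vectors). -/
noncomputable def vComp {E : Type*} (σ τ : E → SignType) : E → SignType :=
  fun e => if σ e = 0 then τ e else σ e

/-- Any point of the closure of a face satisfies the weak sign conditions. -/
lemma closure_face_eq_abs {V : Type*} [NormedAddCommGroup V] [InnerProductSpace ℝ V]
    {E : Type*} (α : E → V) (σC : E → SignType) (e : E) {c : V}
    (hc : c ∈ closure (faceVecSet α σC)) :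
    ⟪α e, c⟫_ℝ = |⟪α e, c⟫_ℝ| * (σC e : ℝ) := by
  have hsub : closure (faceVecSet α σC) ⊆
      {y | ⟪α e, y⟫_ℝ = |⟪α e, y⟫_ℝ| * (σC e : ℝ)} := by
    apply closure_minimal
    · intro y hy
      have h : SignType.sign ⟪α e, y⟫_ℝ = σC e := congrFun hy e
      simp only [Set.mem_setOf_eq, ← h]
      rw [mul_comm, sign_mul_abs]
    · have hcont : Continuous fun y : V => ⟪α e, y⟫_ℝ :=
        Continuous.inner continuous_const continuous_id
      exact isClosed_eq hcont ((hcont.abs).mul continuous_const)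
  exact hsub hc

/-- Points of `span D` vanish on the hyperplanes containing `D`. -/
lemma span_face_inner_zero {V : Type*} [NormedAddCommGroup V] [InnerProductSpace ℝ V]
    {E : Type*} (α : E → V) (σD : E → SignType) (e : E) (h0 : σD e = 0) {w : V}
    (hw : w ∈ Submodule.span ℝ (faceVecSet α σD)) : ⟪α e, w⟫_ℝ = 0 := by
  induction hw using Submodule.span_induction with
  | mem y hy =>
    have h : SignType.sign ⟪α e, y⟫_ℝ = σD e := congrFun hy e
    rw [h0] at h
    exact sign_eq_zero_iff.mp h
  | zero => simp
  | add y z _ _ hy hz => rw [inner_add_right, hy, hz, add_zero]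
  | smul a y _ hy => rw [real_inner_smul_right, hy, mul_zero]

/-- let `C`, `D` be faces of a finite central arrangement with
`D ≤ C`, and let `x` be a point whose face `C₀ = signVec α x` is a chamber.  Then
`x ∈ closure C + span D` iff `D ∘ C₀ ≤ C`; these conditions force `C` to be a
chamber, and they are equivalent to `D ∘ C₀ = C`. -/
theorem stmt_11 {V : Type*} [NormedAddCommGroup V] [InnerProductSpace ℝ V]
    [FiniteDimensional ℝ V] {E : Type*} [Fintype E]
    (α : E → V) (σC σD : E → SignType) (x : V)
    (hC : IsFaceVec α σC) (hD : IsFaceVec α σD) (hDC : vLE σD σC)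
    (hch : ∀ e, signVec α x e ≠ 0) :
    ((x ∈ closure (faceVecSet α σC) + (Submodule.span ℝ (faceVecSet α σD) : Set V)) ↔
        vLE (vComp σD (signVec α x)) σC) ∧
    ((x ∈ closure (faceVecSet α σC) + (Submodule.span ℝ (faceVecSet α σD) : Set V)) →
        ∀ e, σC e ≠ 0) ∧
    ((x ∈ closure (faceVecSet α σC) + (Submodule.span ℝ (faceVecSet α σD) : Set V)) ↔
        vComp σD (signVec α x) = σC) := by
  -- the composition is a full (chamber) sign vector
  have hfull : ∀ e, vComp σD (signVec α x) e ≠ 0 := by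
    intro e
    unfold vComp
    split
    · exact hch e
    · assumption
  -- Forward direction: membership implies `vComp σD C₀ = σC`.
  have fwd : (x ∈ closure (faceVecSet α σC) +
      (Submodule.span ℝ (faceVecSet α σD) : Set V)) → vComp σD (signVec α x) = σC := by
    intro hmem
    obtain ⟨c, hc, w, hw, hcw⟩ := Set.mem_add.mp hmem
    have hw' : w ∈ Submodule.span ℝ (faceVecSet α σD) := hw
    funext e
    unfold vComp
    split
    · rename_i h0
      -- on hyperplanes containing D, `x` and `c` agree
      have hwz : ⟪α e, w⟫_ℝ = 0 := span_face_inner_zero α σD e h0 hw'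
      have hx : ⟪α e, x⟫_ℝ = ⟪α e, c⟫_ℝ := by
        rw [← hcw, inner_add_right, hwz, add_zero]
      have habs : ⟪α e, c⟫_ℝ = |⟪α e, c⟫_ℝ| * (σC e : ℝ) := closure_face_eq_abs α σC e hc
      have hxne : ⟪α e, x⟫_ℝ ≠ 0 := fun h => hch e (by simp [signVec, h])
      have hcne : ⟪α e, c⟫_ℝ ≠ 0 := by rw [← hx]; exact hxne
      have hcabs : 0 < |⟪α e, c⟫_ℝ| := abs_pos.mpr hcne
      show SignType.sign ⟪α e, x⟫_ℝ = σC e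
      rw [hx, habs]
      cases hσ : σC e with
      | zero => exfalso; apply hcne; rw [habs, hσ]; simp
      | pos =>
        have : (0:ℝ) < |⟪α e, c⟫_ℝ| * ((SignType.pos : SignType) : ℝ) := by
          simpa using hcabs
        exact sign_pos this
      | neg =>
        have : |⟪α e, c⟫_ℝ| * ((SignType.neg : SignType) : ℝ) < 0 := by
          simpa using hcabs
        exact sign_neg this
    · rename_i h0
      rcases hDC e with h | h
      · exact absurd h h0
      · exact h
  -- Backward direction: `vComp σD C₀ = σC` implies membership.
  have bwd : vComp σD (signVec α x) = σC → (x ∈ closure (faceVecSet α σC) +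
      (Submodule.span ℝ (faceVecSet α σD) : Set V)) := by
    intro heq
    obtain ⟨d, hd⟩ := hD
    set t : ℝ := 1 + ∑ e, |⟪α e, x⟫_ℝ| / |⟪α e, d⟫_ℝ| with ht_def
    have ht : ∀ e, ⟪α e, d⟫_ℝ ≠ 0 → |⟪α e, x⟫_ℝ| < t * |⟪α e, d⟫_ℝ| := by
      intro e hde
      have hpos : 0 < |⟪α e, d⟫_ℝ| := abs_pos.mpr hde
      rw [← div_lt_iff₀ hpos]
      have hle : |⟪α e, x⟫_ℝ| / |⟪α e, d⟫_ℝ| ≤ ∑ e, |⟪α e, x⟫_ℝ| / |⟪α e, d⟫_ℝ| :=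
        Finset.single_le_sum (f := fun i => |⟪α i, x⟫_ℝ| / |⟪α i, d⟫_ℝ|)
          (fun i _ => by positivity) (Finset.mem_univ e)
      rw [ht_def]
      linarith
    have hsign : signVec α (x + t • d) = σC := by
      funext e
      have hinner : ⟪α e, x + t • d⟫_ℝ = ⟪α e, x⟫_ℝ + t * ⟪α e, d⟫_ℝ := by
        rw [inner_add_right, real_inner_smul_right]
      by_cases h0 : σD e = 0
      · have hdz : ⟪α e, d⟫_ℝ = 0 := by
          have h : SignType.sign ⟪α e, d⟫_ℝ = σD e := congrFun hd e
          rw [h0] at h; exact sign_eq_zero_iff.mp h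
        have hσ : σC e = signVec α x e := by
          rw [← heq]; unfold vComp; rw [if_pos h0]
        show SignType.sign ⟪α e, x + t • d⟫_ℝ = σC e
        rw [hinner, hdz, mul_zero, add_zero, hσ]; rfl
      · have hσ : σC e = σD e := by
          rw [← heq]; unfold vComp; rw [if_neg h0]
        have hde : ⟪α e, d⟫_ℝ ≠ 0 := by
          intro h
          apply h0
          have h' : SignType.sign ⟪α e, d⟫_ℝ = σD e := congrFun hd e
          rw [h] at h'; rw [← h']; simp
        have habs := ht e hde
        show SignType.sign ⟪α e, x + t • d⟫_ℝ = σC e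
        rw [hinner, hσ]
        have hds : SignType.sign ⟪α e, d⟫_ℝ = σD e := congrFun hd e
        rcases lt_trichotomy (⟪α e, d⟫_ℝ) 0 with hlt | hz | hgt
        · have habs' : |⟪α e, d⟫_ℝ| = -⟪α e, d⟫_ℝ := abs_of_neg hlt
          rw [habs'] at habs
          have : ⟪α e, x⟫_ℝ + t * ⟪α e, d⟫_ℝ < 0 := by
            have := le_abs_self (⟪α e, x⟫_ℝ)
            nlinarith [le_abs_self (⟪α e, x⟫_ℝ)]
          rw [sign_neg this, ← hds, sign_neg hlt]
        · exact absurd hz hde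
        · have habs' : |⟪α e, d⟫_ℝ| = ⟪α e, d⟫_ℝ := abs_of_pos hgt
          rw [habs'] at habs
          have : 0 < ⟪α e, x⟫_ℝ + t * ⟪α e, d⟫_ℝ := by
            nlinarith [neg_abs_le (⟪α e, x⟫_ℝ)]
          rw [sign_pos this, ← hds, sign_pos hgt]
    have hdmem : d ∈ Submodule.span ℝ (faceVecSet α σD) := Submodule.subset_span hd
    refine Set.mem_add.mpr ⟨x + t • d, subset_closure hsign, -(t • d), ?_, by abel⟩
    exact Submodule.neg_mem _ (Submodule.smul_mem _ t hdmem)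
  refine ⟨⟨fun h e => Or.inr (congrFun (fwd h) e), fun h => bwd ?_⟩,
    fun h e => ?_, fwd, bwd⟩
  · funext e
    rcases h e with h' | h'
    · exact absurd h' (hfull e)
    · exact h'
  · rw [← fwd h]
    exact hfull e
end

section
/- Let Φ be a finite pseudo-root system with positive system Φ⁺, and consider a dihedral (rank 2) situation or, in general, a normalized pseudo-root system Φ. Let θ = (α₁,…,α_r) be a sequence of pairwise orthogonal unit pseudo-roots with no pseudo-root of Φ orthogonal to all of them, and let θ' be obtained from θ by exchanging α_i and α_{i+1}. Let Φ' = Φ ∩ (ℝα_i + ℝα_{i+1}); then Φ' is of type A₁×A₁ or I₂(m) with m even, m ≥ 4, and the cardinality of Φ⁺_θ ∩ Φ⁻_{θ'} is even if Φ' = A₁×A₁, and is congruent to m/2 − 1 modulo 2 if Φ' = I₂(m). -/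
open scoped InnerProductSpace Pointwise

/-!
Write `P = span {θ i, θ j}`. Besides `±θ i, ±θ j`, the roots in `P` lie in the four open
quadrants, which `β ↦ -β` and the reflection in `θ j` permute; hence `|Φ ∩ P| = 4 + 4q`, where `q`
counts the roots with `⟪θ i, β⟫ > 0 > ⟪θ j, β⟫`, and `m = 2q + 2`.

Exchanging the adjacent entries `i` and `j` changes the lexicographic sign exactly of the roots whose
first nonzero coordinate is the `i`-th, positive, and whose `j`-th coordinate is negative. The
reflection `β ↦ -s_{θ i} s_{θ j} β` in the plane `P` preserves this set and fixes precisely its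
elements lying in `P`, which are the `q` roots above; so `|Φ⁺_θ ∩ Φ⁻_θ'| ≡ q = m / 2 - 1 (mod 2)`.
-/

/-- `β` is lexicographically positive with respect to the sequence `θ`. -/
def lexPos {V : Type*} [NormedAddCommGroup V] [InnerProductSpace ℝ V]
    {r : ℕ} (θ : Fin r → V) (β : V) : Prop :=
  ∃ k, 0 < ⟪θ k, β⟫_ℝ ∧ ∀ j, j < k → ⟪θ j, β⟫_ℝ = 0

/-- The system of positive pseudo-roots `Φ⁺_θ` determined lexicographically by `θ`. -/
def PhiPlusSeq {V : Type*} [NormedAddCommGroup V] [InnerProductSpace ℝ V]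
    (Φ : Set V) {r : ℕ} (θ : Fin r → V) : Set V :=
  {β ∈ Φ | lexPos θ β}

section

open Set Function

theorem Set.ncard_modEq_ncard_inter_fixedPoints {α : Type*} {s : Set α} (hs : s.Finite)
    {f : α → α} (hf : MapsTo f s s) (hff : ∀ x ∈ s, f (f x) = x) :
    s.ncard ≡ (s ∩ fixedPoints f).ncard [MOD 2] := by
  classical
  have : Fintype s := hs.fintype
  let g : Function.End s := hf.restrict
  have hg : g ^ 2 ^ 1 = 1 := by
    funext ⟨x, hx⟩
    exact Subtype.ext (hff x hx)
  have himage : Subtype.val '' fixedPoints g = s ∩ fixedPoints f := by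
    ext x
    simp [g, IsFixedPt, MapsTo.restrict, Subtype.map, and_comm]
  rw [← himage, ncard_image_of_injective _ Subtype.val_injective, ← Nat.card_coe_set_eq,
    ← Nat.card_coe_set_eq, Nat.card_eq_fintype_card, Nat.card_eq_fintype_card]
  exact Equiv.Perm.card_fixedPoints_modEq hg

theorem Set.ncard_eq_ncard_zero_add_two_mul_ncard_pos {α : Type*} {s : Set α} (hs : s.Finite)
    {f : α → α} (hf : MapsTo f s s) (hff : ∀ x ∈ s, f (f x) = x) {c : α → ℝ}
    (hc : ∀ x ∈ s, c (f x) = -c x) :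
    s.ncard = {x ∈ s | c x = 0}.ncard + 2 * {x ∈ s | 0 < c x}.ncard := by
  have hneg : {x ∈ s | c x < 0}.ncard = {x ∈ s | 0 < c x}.ncard := by
    refine ncard_congr (fun x _ => f x) (fun x hx => ⟨hf hx.1, ?_⟩)
      (fun x y hx hy hxy => by rw [← hff x hx.1, hxy, hff y hy.1])
      (fun y hy => ⟨f y, ⟨hf hy.1, ?_⟩, hff y hy.1⟩)
    · rw [hc x hx.1]; linarith [hx.2]
    · rw [hc y hy.1]; linarith [hy.2]
  have hsplit : s = {x ∈ s | c x = 0} ∪ ({x ∈ s | 0 < c x} ∪ {x ∈ s | c x < 0}) := by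
    ext x
    simp only [mem_union, mem_sep_iff, ← and_or_left, iff_self_and]
    intro
    rcases lt_trichotomy (c x) 0 with h | h | h <;> simp [h]
  have hfin : ∀ p : α → Prop, {x ∈ s | p x}.Finite := fun p => hs.subset (sep_subset _ _)
  nth_rw 1 [hsplit]
  rw [ncard_union_eq _ (hfin _) ((hfin _).union (hfin _)), ncard_union_eq _ (hfin _) (hfin _),
    hneg, two_mul]
  · exact disjoint_left.2 fun x h h' => by linarith [h.2, h'.2]
  · exact disjoint_left.2 fun x h h' => by rcases h' with h' | h' <;> linarith [h.2, h'.2]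

variable {V : Type*} [NormedAddCommGroup V] [InnerProductSpace ℝ V]

def rootReflection (α β : V) : V := β - (2 * ⟪α, β⟫_ℝ) • α

section rootReflection

variable {α : V}

theorem inner_rootReflection_self (hα : ‖α‖ = 1) (β : V) :
    ⟪α, rootReflection α β⟫_ℝ = -⟪α, β⟫_ℝ := by
  rw [rootReflection, inner_sub_right, real_inner_smul_right, real_inner_self_eq_norm_sq, hα]
  ring

theorem inner_rootReflection_of_inner_eq_zero {γ : V} (h : ⟪γ, α⟫_ℝ = 0) (β : V) :
    ⟪γ, rootReflection α β⟫_ℝ = ⟪γ, β⟫_ℝ := by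
  rw [rootReflection, inner_sub_right, real_inner_smul_right, h, mul_zero, sub_zero]

theorem rootReflection_rootReflection (hα : ‖α‖ = 1) (β : V) :
    rootReflection α (rootReflection α β) = β := by
  rw [rootReflection, inner_rootReflection_self hα, rootReflection]
  module

theorem rootReflection_self (hα : ‖α‖ = 1) : rootReflection α α = -α := by
  rw [rootReflection, real_inner_self_eq_norm_sq, hα]
  module

end rootReflection

variable {Φ : Set V} {e₁ e₂ : V}

theorem neg_mem_of_rootReflection_mem (hunit : ∀ α ∈ Φ, ‖α‖ = 1)
    (hrefl : ∀ α ∈ Φ, ∀ β ∈ Φ, rootReflection α β ∈ Φ) {β : V} (hβ : β ∈ Φ) : -β ∈ Φ :=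
  rootReflection_self (hunit β hβ) ▸ hrefl β hβ β hβ

theorem mem_span_pair_iff_eq_inner_smul_add (h₁ : ‖e₁‖ = 1) (h₂ : ‖e₂‖ = 1)
    (h₁₂ : ⟪e₁, e₂⟫_ℝ = 0) {β : V} :
    β ∈ Submodule.span ℝ {e₁, e₂} ↔ β = ⟪e₁, β⟫_ℝ • e₁ + ⟪e₂, β⟫_ℝ • e₂ := by
  refine ⟨fun hβ => ?_, fun hβ => Submodule.mem_span_pair.2 ⟨_, _, hβ.symm⟩⟩
  obtain ⟨a, b, rfl⟩ := Submodule.mem_span_pair.1 hβ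
  simp [inner_add_right, real_inner_smul_right, h₁, h₂, h₁₂, real_inner_comm e₁ e₂]

def planeReflection (e₁ e₂ β : V) : V := rootReflection e₁ (rootReflection e₂ (-β))

theorem planeReflection_mem (hunit : ∀ α ∈ Φ, ‖α‖ = 1)
    (hrefl : ∀ α ∈ Φ, ∀ β ∈ Φ, rootReflection α β ∈ Φ) (he₁ : e₁ ∈ Φ) (he₂ : e₂ ∈ Φ)
    {β : V} (hβ : β ∈ Φ) : planeReflection e₁ e₂ β ∈ Φ :=
  hrefl _ he₁ _ (hrefl _ he₂ _ (neg_mem_of_rootReflection_mem hunit hrefl hβ))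

theorem inner_planeReflection_left (h₁ : ‖e₁‖ = 1) (h₁₂ : ⟪e₁, e₂⟫_ℝ = 0) (β : V) :
    ⟪e₁, planeReflection e₁ e₂ β⟫_ℝ = ⟪e₁, β⟫_ℝ := by
  rw [planeReflection, inner_rootReflection_self h₁, inner_rootReflection_of_inner_eq_zero h₁₂,
    inner_neg_right, neg_neg]

theorem inner_planeReflection_right (h₂ : ‖e₂‖ = 1) (h₁₂ : ⟪e₁, e₂⟫_ℝ = 0) (β : V) :
    ⟪e₂, planeReflection e₁ e₂ β⟫_ℝ = ⟪e₂, β⟫_ℝ := by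
  rw [planeReflection, inner_rootReflection_of_inner_eq_zero (by rwa [real_inner_comm]),
    inner_rootReflection_self h₂, inner_neg_right, neg_neg]

theorem inner_planeReflection_of_orthogonal {w : V} (hw₁ : ⟪w, e₁⟫_ℝ = 0)
    (hw₂ : ⟪w, e₂⟫_ℝ = 0) (β : V) : ⟪w, planeReflection e₁ e₂ β⟫_ℝ = -⟪w, β⟫_ℝ := by
  rw [planeReflection, inner_rootReflection_of_inner_eq_zero hw₁,
    inner_rootReflection_of_inner_eq_zero hw₂, inner_neg_right]

theorem planeReflection_eq (h₁₂ : ⟪e₁, e₂⟫_ℝ = 0) (β : V) :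
    planeReflection e₁ e₂ β = (2 * ⟪e₁, β⟫_ℝ) • e₁ + (2 * ⟪e₂, β⟫_ℝ) • e₂ - β := by
  rw [planeReflection, rootReflection, inner_rootReflection_of_inner_eq_zero h₁₂, rootReflection,
    inner_neg_right, inner_neg_right]
  module

theorem planeReflection_planeReflection (h₁ : ‖e₁‖ = 1) (h₂ : ‖e₂‖ = 1)
    (h₁₂ : ⟪e₁, e₂⟫_ℝ = 0) (β : V) :
    planeReflection e₁ e₂ (planeReflection e₁ e₂ β) = β := by
  rw [planeReflection_eq h₁₂ (planeReflection e₁ e₂ β), inner_planeReflection_left h₁ h₁₂,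
    inner_planeReflection_right h₂ h₁₂, planeReflection_eq h₁₂]
  module

theorem planeReflection_eq_self_iff (h₁ : ‖e₁‖ = 1) (h₂ : ‖e₂‖ = 1)
    (h₁₂ : ⟪e₁, e₂⟫_ℝ = 0) {β : V} :
    planeReflection e₁ e₂ β = β ↔ β ∈ Submodule.span ℝ {e₁, e₂} := by
  rw [mem_span_pair_iff_eq_inner_smul_add h₁ h₂ h₁₂, planeReflection_eq h₁₂]
  constructor <;> intro h
  · linear_combination (norm := module) (-(1 / 2 : ℝ)) • h
  · linear_combination (norm := module) (-2 : ℝ) • h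

theorem inter_span_pair_sep_inner_eq_zero (hunit : ∀ α ∈ Φ, ‖α‖ = 1)
    (hred : ∀ α ∈ Φ, ∀ c : ℝ, c • α ∈ Φ → c = 1 ∨ c = -1)
    (hrefl : ∀ α ∈ Φ, ∀ β ∈ Φ, rootReflection α β ∈ Φ) (he₂ : e₂ ∈ Φ) (h₁ : ‖e₁‖ = 1)
    (h₁₂ : ⟪e₁, e₂⟫_ℝ = 0) :
    {β ∈ Φ ∩ (Submodule.span ℝ {e₁, e₂} : Set V) | ⟪e₁, β⟫_ℝ = 0} = {e₂, -e₂} := by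
  have h₂ := hunit e₂ he₂
  have he₂P : e₂ ∈ Submodule.span ℝ {e₁, e₂} := Submodule.subset_span (by simp)
  ext β
  constructor
  · rintro ⟨⟨hβ, hβP⟩, h⟩
    rw [SetLike.mem_coe, mem_span_pair_iff_eq_inner_smul_add h₁ h₂ h₁₂, h, zero_smul,
      zero_add] at hβP
    rcases hred e₂ he₂ _ (hβP ▸ hβ) with hc | hc
    · exact Or.inl (by rw [hβP, hc, one_smul])
    · exact Or.inr (by rw [hβP, hc, neg_one_smul]; rfl)
  · rintro (rfl | rfl)
    · exact ⟨⟨he₂, he₂P⟩, h₁₂⟩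
    · exact ⟨⟨neg_mem_of_rootReflection_mem hunit hrefl he₂, neg_mem he₂P⟩,
        by rw [inner_neg_right, h₁₂, neg_zero]⟩

theorem ncard_inter_span_pair (hfin : Φ.Finite) (hunit : ∀ α ∈ Φ, ‖α‖ = 1)
    (hred : ∀ α ∈ Φ, ∀ c : ℝ, c • α ∈ Φ → c = 1 ∨ c = -1)
    (hrefl : ∀ α ∈ Φ, ∀ β ∈ Φ, rootReflection α β ∈ Φ) (he₁ : e₁ ∈ Φ) (he₂ : e₂ ∈ Φ)
    (h₁₂ : ⟪e₁, e₂⟫_ℝ = 0) :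
    (Φ ∩ (Submodule.span ℝ {e₁, e₂} : Set V)).ncard =
      4 + 4 * {β ∈ Φ ∩ (Submodule.span ℝ {e₁, e₂} : Set V) |
        0 < ⟪e₁, β⟫_ℝ ∧ ⟪e₂, β⟫_ℝ < 0}.ncard := by
  set P := Submodule.span ℝ {e₁, e₂} with hP
  have h₁ := hunit e₁ he₁
  have h₂ := hunit e₂ he₂
  have hT : (Φ ∩ (P : Set V)).Finite := hfin.inter_of_left _
  have hsplit₁ := Set.ncard_eq_ncard_zero_add_two_mul_ncard_pos hT
    (fun β hβ => ⟨neg_mem_of_rootReflection_mem hunit hrefl hβ.1, P.neg_mem hβ.2⟩)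
    (fun β _ => neg_neg β) (c := fun β => ⟪e₁, β⟫_ℝ) (fun β _ => inner_neg_right _ _)
  have hsplit₂ := Set.ncard_eq_ncard_zero_add_two_mul_ncard_pos
    (s := {β ∈ Φ ∩ (P : Set V) | 0 < ⟪e₁, β⟫_ℝ}) (hT.subset (sep_subset _ _))
    (fun β hβ => ⟨⟨hrefl e₂ he₂ β hβ.1.1,
        P.sub_mem hβ.1.2 (P.smul_mem _ (Submodule.subset_span (by simp)))⟩,
      by rw [inner_rootReflection_of_inner_eq_zero h₁₂]; exact hβ.2⟩)
    (fun β _ => rootReflection_rootReflection h₂ β) (c := fun β => -⟪e₂, β⟫_ℝ)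
    (fun β _ => by rw [inner_rootReflection_self h₂])
  have haxis₂ : {β ∈ Φ ∩ (P : Set V) | ⟪e₂, β⟫_ℝ = 0} = {e₁, -e₁} := by
    rw [hP, Set.pair_comm e₁ e₂]
    exact inter_span_pair_sep_inner_eq_zero hunit hred hrefl he₁ h₂ (by rwa [real_inner_comm])
  have hpos_axis₂ : {β ∈ {β ∈ Φ ∩ (P : Set V) | 0 < ⟪e₁, β⟫_ℝ} | -⟪e₂, β⟫_ℝ = 0} = {e₁} := by
    have he₁_pos : 0 < ⟪e₁, e₁⟫_ℝ := by rw [real_inner_self_eq_norm_sq, h₁]; norm_num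
    ext β
    constructor
    · rintro ⟨⟨hβ, hpos⟩, h0⟩
      have : β ∈ ({e₁, -e₁} : Set V) := haxis₂ ▸ ⟨hβ, neg_eq_zero.1 h0⟩
      rcases this with rfl | rfl
      · rfl
      · rw [inner_neg_right] at hpos; linarith
    · intro hβ
      rw [mem_singleton_iff.1 hβ]
      have : e₁ ∈ {β ∈ Φ ∩ (P : Set V) | ⟪e₂, β⟫_ℝ = 0} := haxis₂ ▸ Or.inl rfl
      exact ⟨⟨this.1, he₁_pos⟩, by rw [this.2, neg_zero]⟩
  have hquad : {β ∈ {β ∈ Φ ∩ (P : Set V) | 0 < ⟪e₁, β⟫_ℝ} | 0 < -⟪e₂, β⟫_ℝ} =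
      {β ∈ Φ ∩ (P : Set V) | 0 < ⟪e₁, β⟫_ℝ ∧ ⟪e₂, β⟫_ℝ < 0} := by
    ext β
    simp only [mem_sep_iff, neg_pos, and_assoc]
  have he₂_ne_neg : e₂ ≠ -e₂ := by
    have : e₂ ≠ 0 := by rintro rfl; simp at h₂
    simpa [eq_neg_iff_add_eq_zero, ← two_smul ℝ] using this
  rw [hsplit₁, hsplit₂, inter_span_pair_sep_inner_eq_zero hunit hred hrefl he₂ h₁ h₁₂, hpos_axis₂,
    hquad, ncard_pair he₂_ne_neg, ncard_singleton]
  ring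

theorem ncard_modEq_ncard_quadrant {ι : Type*} (w : ι → V) (K : Set ι)
    (hw : ∀ k ∈ K, ⟪w k, e₁⟫_ℝ = 0 ∧ ⟪w k, e₂⟫_ℝ = 0) (hfin : Φ.Finite)
    (hunit : ∀ α ∈ Φ, ‖α‖ = 1) (hrefl : ∀ α ∈ Φ, ∀ β ∈ Φ, rootReflection α β ∈ Φ)
    (he₁ : e₁ ∈ Φ) (he₂ : e₂ ∈ Φ) (h₁₂ : ⟪e₁, e₂⟫_ℝ = 0) :
    {β ∈ Φ | (∀ k ∈ K, ⟪w k, β⟫_ℝ = 0) ∧ 0 < ⟪e₁, β⟫_ℝ ∧ ⟪e₂, β⟫_ℝ < 0}.ncard ≡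
      {β ∈ Φ ∩ (Submodule.span ℝ {e₁, e₂} : Set V) |
        0 < ⟪e₁, β⟫_ℝ ∧ ⟪e₂, β⟫_ℝ < 0}.ncard [MOD 2] := by
  have h₁ := hunit e₁ he₁
  have h₂ := hunit e₂ he₂
  have hmaps : MapsTo (planeReflection e₁ e₂)
      {β ∈ Φ | (∀ k ∈ K, ⟪w k, β⟫_ℝ = 0) ∧ 0 < ⟪e₁, β⟫_ℝ ∧ ⟪e₂, β⟫_ℝ < 0}
      {β ∈ Φ | (∀ k ∈ K, ⟪w k, β⟫_ℝ = 0) ∧ 0 < ⟪e₁, β⟫_ℝ ∧ ⟪e₂, β⟫_ℝ < 0} := by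
    rintro β ⟨hβ, h0, hpos, hneg⟩
    refine ⟨planeReflection_mem hunit hrefl he₁ he₂ hβ, fun k hk => ?_,
      by rwa [inner_planeReflection_left h₁ h₁₂], by rwa [inner_planeReflection_right h₂ h₁₂]⟩
    rw [inner_planeReflection_of_orthogonal (hw k hk).1 (hw k hk).2, h0 k hk, neg_zero]
  have hfixed : {β ∈ Φ | (∀ k ∈ K, ⟪w k, β⟫_ℝ = 0) ∧ 0 < ⟪e₁, β⟫_ℝ ∧ ⟪e₂, β⟫_ℝ < 0} ∩
      fixedPoints (planeReflection e₁ e₂) =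
      {β ∈ Φ ∩ (Submodule.span ℝ {e₁, e₂} : Set V) | 0 < ⟪e₁, β⟫_ℝ ∧ ⟪e₂, β⟫_ℝ < 0} := by
    ext β
    simp only [mem_inter_iff, mem_sep_iff, mem_fixedPoints, IsFixedPt, SetLike.mem_coe,
      ← planeReflection_eq_self_iff h₁ h₂ h₁₂]
    constructor
    · rintro ⟨⟨hβ, -, hpos, hneg⟩, hfix⟩
      exact ⟨⟨hβ, hfix⟩, hpos, hneg⟩
    · rintro ⟨⟨hβ, hfix⟩, hpos, hneg⟩
      refine ⟨⟨hβ, fun k hk => ?_, hpos, hneg⟩, hfix⟩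
      have := inner_planeReflection_of_orthogonal (hw k hk).1 (hw k hk).2 β
      rw [hfix] at this
      linarith
  exact hfixed ▸ Set.ncard_modEq_ncard_inter_fixedPoints (hfin.subset (sep_subset _ _)) hmaps
    (fun β _ => planeReflection_planeReflection h₁ h₂ h₁₂ β)

theorem not_lexPos_and_lexPos_neg {r : ℕ} (θ : Fin r → V) (β : V) :
    ¬(lexPos θ β ∧ lexPos θ (-β)) := by
  rintro ⟨⟨k, hk, hk0⟩, l, hl, hl0⟩
  rw [inner_neg_right] at hl
  rcases lt_trichotomy k l with h | rfl | h
  · have := hl0 k h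
    rw [inner_neg_right, neg_eq_zero] at this
    linarith
  · linarith
  · linarith [hk0 l h]

theorem lexPos_and_lexPos_swap_neg_iff {r : ℕ} (θ : Fin r → V) (β : V) {i j : Fin r}
    (hij : (j : ℕ) = i + 1) :
    lexPos θ β ∧ lexPos (θ ∘ Equiv.swap i j) (-β) ↔
      (∀ k < i, ⟪θ k, β⟫_ℝ = 0) ∧ 0 < ⟪θ i, β⟫_ℝ ∧ ⟪θ j, β⟫_ℝ < 0 := by
  have hswap_lt : ∀ k < i, Equiv.swap i j k = k := fun k hk =>
    Equiv.swap_apply_of_ne_of_ne (by omega) (by omega)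
  constructor
  · rintro ⟨⟨k, hk, hk0⟩, hneg⟩
    suffices k = i ∧ ⟪θ j, β⟫_ℝ < 0 by obtain ⟨rfl, hj⟩ := this; exact ⟨hk0, hk, hj⟩
    -- Otherwise the first nonzero coordinate of `β` for the swapped sequence is positive.
    by_contra hbad
    refine not_lexPos_and_lexPos_neg _ β ⟨?_, hneg⟩
    simp only [lexPos, Function.comp_apply]
    by_cases hki : k = i
    · subst hki
      rcases (not_lt.1 fun hj => hbad ⟨rfl, hj⟩).lt_or_eq with hj | hj
      · exact ⟨k, by rwa [Equiv.swap_apply_left], fun l hl => by rw [hswap_lt l hl]; exact hk0 l hl⟩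
      · refine ⟨j, by rwa [Equiv.swap_apply_right], fun l hl => ?_⟩
        rcases (show l < k ∨ l = k by omega) with hl | rfl
        · rw [hswap_lt l hl]; exact hk0 l hl
        · rw [Equiv.swap_apply_left, hj]
    by_cases hkj : k = j
    · subst hkj
      exact ⟨i, by rwa [Equiv.swap_apply_left],
        fun l hl => by rw [hswap_lt l hl]; exact hk0 l (by omega)⟩
    · refine ⟨k, by rwa [Equiv.swap_apply_of_ne_of_ne hki hkj], fun l hl => hk0 _ ?_⟩
      rw [Equiv.swap_apply_def]
      split_ifs <;> omega
  · rintro ⟨h0, hi, hj⟩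
    refine ⟨⟨i, hi, h0⟩, i, ?_, fun l hl => ?_⟩
    · simpa using hj
    · simp [hswap_lt l hl, h0 l hl]

theorem phiPlusSeq_inter_neg_phiPlusSeq_swap (hneg : ∀ β ∈ Φ, -β ∈ Φ) {r : ℕ}
    (θ : Fin r → V) {i j : Fin r} (hij : (j : ℕ) = i + 1) :
    PhiPlusSeq Φ θ ∩ -PhiPlusSeq Φ (θ ∘ Equiv.swap i j) =
      {β ∈ Φ | (∀ k < i, ⟪θ k, β⟫_ℝ = 0) ∧ 0 < ⟪θ i, β⟫_ℝ ∧ ⟪θ j, β⟫_ℝ < 0} := by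
  ext β
  simp only [PhiPlusSeq, mem_inter_iff, mem_neg, mem_sep_iff,
    ← lexPos_and_lexPos_swap_neg_iff θ β hij]
  constructor
  · rintro ⟨⟨hβ, hlex⟩, -, hlex'⟩
    exact ⟨hβ, hlex, hlex'⟩
  · rintro ⟨hβ, hlex, hlex'⟩
    exact ⟨⟨hβ, hlex⟩, hneg β hβ, hlex'⟩

end

theorem stmt_12_general {V : Type*} [NormedAddCommGroup V] [InnerProductSpace ℝ V]
    (Φ : Set V) (hfin : Φ.Finite)
    (hunit : ∀ α ∈ Φ, ‖α‖ = 1)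
    (hred : ∀ α ∈ Φ, ∀ c : ℝ, c • α ∈ Φ → c = 1 ∨ c = -1)
    (hrefl : ∀ α ∈ Φ, ∀ β ∈ Φ, β - (2 * ⟪α, β⟫_ℝ) • α ∈ Φ)
    {r : ℕ} (θ : Fin r → V)
    (hθΦ : ∀ k, θ k ∈ Φ)
    (horth : ∀ k l, k ≠ l → ⟪θ k, θ l⟫_ℝ = 0)
    (i j : Fin r) (hij : (j : ℕ) = (i : ℕ) + 1) :
    ∃ m : ℕ, Even m ∧ 2 ≤ m ∧
      (Φ ∩ (Submodule.span ℝ {θ i, θ j} : Set V)).ncard = 2 * m ∧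
      (PhiPlusSeq Φ θ ∩ (-(PhiPlusSeq Φ (θ ∘ Equiv.swap i j)))).ncard % 2
        = (m / 2 - 1) % 2 := by
  have hij_ne : i ≠ j := fun h => by omega
  have horth_lt : ∀ k ∈ Set.Iio i, ⟪θ k, θ i⟫_ℝ = 0 ∧ ⟪θ k, θ j⟫_ℝ = 0 := fun k hk =>
    ⟨horth k i (ne_of_lt hk), horth k j (fun h => by simp only [Set.mem_Iio] at hk; omega)⟩
  set q := {β ∈ Φ ∩ (Submodule.span ℝ {θ i, θ j} : Set V) |
    0 < ⟪θ i, β⟫_ℝ ∧ ⟪θ j, β⟫_ℝ < 0}.ncard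
  refine ⟨2 * q + 2, ⟨q + 1, by ring⟩, by omega, ?_, ?_⟩
  · rw [ncard_inter_span_pair hfin hunit hred hrefl (hθΦ i) (hθΦ j) (horth i j hij_ne)]
    ring
  · rw [phiPlusSeq_inter_neg_phiPlusSeq_swap (fun β => neg_mem_of_rootReflection_mem hunit hrefl)
      θ hij, show (2 * q + 2) / 2 - 1 = q by omega]
    exact ncard_modEq_ncard_quadrant θ (Set.Iio i) horth_lt hfin hunit hrefl (hθΦ i) (hθΦ j)
      (horth i j hij_ne)

/-- let `Φ` be a normalized pseudo-root system, let
`θ = (α₁, …, α_r)` be a sequence of pairwise orthogonal elements of `Φ` with no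
pseudo-root orthogonal to all of them, and let `θ'` be obtained from `θ` by
swapping the `i`-th and `(i+1)`-st entries.  Then
`Φ' = Φ ∩ (ℝ αᵢ + ℝ α_{i+1})` is a (rank two) pseudo-root system with `2m`
elements for some even `m ≥ 2` (type `A₁ × A₁` when `m = 2` and `I₂(m)` with `m`
even, `m ≥ 4`, otherwise), and `|Φ⁺_θ ∩ Φ⁻_{θ'}| ≡ m/2 − 1 (mod 2)`; in
particular it is even in the `A₁ × A₁` case. -/
theorem stmt_12 {V : Type*} [NormedAddCommGroup V] [InnerProductSpace ℝ V]
    [FiniteDimensional ℝ V]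
    (Φ : Set V) (hfin : Φ.Finite)
    (hunit : ∀ α ∈ Φ, ‖α‖ = 1)
    (hred : ∀ α ∈ Φ, ∀ c : ℝ, c • α ∈ Φ → c = 1 ∨ c = -1)
    (hrefl : ∀ α ∈ Φ, ∀ β ∈ Φ, β - (2 * ⟪α, β⟫_ℝ) • α ∈ Φ)
    {r : ℕ} (θ : Fin r → V)
    (hθΦ : ∀ k, θ k ∈ Φ)
    (horth : ∀ k l, k ≠ l → ⟪θ k, θ l⟫_ℝ = 0)
    (hfull : ∀ β ∈ Φ, ∃ k, ⟪θ k, β⟫_ℝ ≠ 0)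
    (i j : Fin r) (hij : (j : ℕ) = (i : ℕ) + 1) :
    ∃ m : ℕ, Even m ∧ 2 ≤ m ∧
      (Φ ∩ (Submodule.span ℝ {θ i, θ j} : Set V)).ncard = 2 * m ∧
      (PhiPlusSeq Φ θ ∩ (-(PhiPlusSeq Φ (θ ∘ Equiv.swap i j)))).ncard % 2
        = (m / 2 - 1) % 2 :=
  stmt_12_general Φ hfin hunit hred hrefl θ hθΦ horth i j hij
end

section
/- Fix a finite central hyperplane arrangement (H_{α_e})_{e∈E} on V with face poset 𝓛 and chambers 𝓣, and fix a base chamber B with a linear order T₁ = B, T₂, …, T_r = −B refining the partial order ⪯_B (T ⪯_B T' iff S(B,T) ⊆ S(B,T')). Define f_B : 𝓛 → 𝓣 by f_B(C) = C ∘ B. Then for each i, f_B⁻¹(T_i) = {C ∈ 𝓛 : C ≤ T_i and C ≰ T_j for all 1 ≤ j < i}. -/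
open scoped InnerProductSpace
open Classical

/-- The separation set `S(σ, τ)` of two faces. -/
noncomputable def sepSet {E : Type*} [Fintype E] (σ τ : E → SignType) : Finset E :=
  Finset.univ.filter fun e => σ e ≠ 0 ∧ σ e = -τ e

lemma isFace_comp {V : Type*} [NormedAddCommGroup V] [InnerProductSpace ℝ V]
    {E : Type*} [Fintype E] {α : E → V} {σ τ : E → SignType}
    (hσ : IsFaceVec α σ) (hτ : IsFaceVec α τ) : IsFaceVec α (vComp σ τ) := by
  obtain ⟨x, hx⟩ := hσ; obtain ⟨y, hy⟩ := hτ
  have key : ∀ e, ∀ᶠ ε : ℝ in nhdsWithin 0 (Set.Ioi 0),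
      SignType.sign ⟪α e, x + ε • y⟫_ℝ = vComp σ τ e := by
    intro e
    have hσe : σ e = SignType.sign ⟪α e, x⟫_ℝ := by rw [← hx]; rfl
    have hτe : τ e = SignType.sign ⟪α e, y⟫_ℝ := by rw [← hy]; rfl
    by_cases h0 : ⟪α e, x⟫_ℝ = 0
    · filter_upwards [self_mem_nhdsWithin] with ε (hε : 0 < ε)
      have : σ e = 0 := by simp [hσe, h0]
      simp [inner_add_right, real_inner_smul_right, h0, vComp, this, hτe,
        sign_mul, sign_pos hε]
    · have habs : ∀ᶠ ε : ℝ in nhdsWithin 0 (Set.Ioi 0),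
          |ε * ⟪α e, y⟫_ℝ| < |⟪α e, x⟫_ℝ| := by
        have ht : Filter.Tendsto (fun ε : ℝ => |ε * ⟪α e, y⟫_ℝ|)
            (nhdsWithin 0 (Set.Ioi 0)) (nhds 0) := by
          have := (continuous_abs.comp (continuous_mul_right ⟪α e, y⟫_ℝ)).tendsto 0
          simp only [Function.comp, zero_mul, abs_zero] at this
          exact this.mono_left nhdsWithin_le_nhds
        exact ht.eventually_lt_const (abs_pos.mpr h0)
      filter_upwards [habs] with ε hε
      have hsign : SignType.sign (⟪α e, x⟫_ℝ + ε * ⟪α e, y⟫_ℝ)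
          = SignType.sign ⟪α e, x⟫_ℝ := by
        rcases lt_trichotomy (⟪α e, x⟫_ℝ) 0 with h | h | h
        · have : ⟪α e, x⟫_ℝ + ε * ⟪α e, y⟫_ℝ < 0 := by
            have := abs_lt.mp hε
            rw [abs_of_neg h] at this; linarith [this.2]
          rw [sign_neg this, sign_neg h]
        · exact absurd h h0
        · have : 0 < ⟪α e, x⟫_ℝ + ε * ⟪α e, y⟫_ℝ := by
            have := abs_lt.mp hε
            rw [abs_of_pos h] at this; linarith [this.1]
          rw [sign_pos this, sign_pos h]
      have : σ e ≠ 0 := by simp [hσe, h0]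
      simp [inner_add_right, real_inner_smul_right, hsign, vComp, this, hσe, h0]
  obtain ⟨ε, hε⟩ := (Filter.eventually_all.mpr key).exists
  exact ⟨x + ε • y, funext hε⟩

lemma signtype_ne_neg {a : SignType} (h : a ≠ 0) : a ≠ -a := by
  cases a <;> simp_all

lemma vLE_comp {E : Type*} (σ τ : E → SignType) : vLE σ (vComp σ τ) := by
  intro e; by_cases h : σ e = 0
  · exact Or.inl h
  · exact Or.inr (by simp [vComp, h])

lemma sep_comp_subset {E : Type*} [Fintype E] [DecidableEq E]
    {B σ τ : E → SignType} (hBch : ∀ e, B e ≠ 0) (hτ : vLE σ τ) :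
    sepSet B (vComp σ B) ⊆ sepSet B τ := by
  intro e he
  simp only [sepSet, Finset.mem_filter, Finset.mem_univ, true_and] at he ⊢
  obtain ⟨hB0, hBe⟩ := he
  have hσ0 : σ e ≠ 0 := by
    intro h; rw [show vComp σ B e = B e from by simp [vComp, h]] at hBe
    exact signtype_ne_neg hB0 hBe
  have hc : vComp σ B e = σ e := by simp [vComp, hσ0]
  rcases hτ e with h | h
  · exact absurd h hσ0
  · exact ⟨hB0, by rw [← h, ← hc]; exact hBe⟩

/-- let `B = T₁, T₂, …, T_r = −B` be a linear order on the chambers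
of a finite central arrangement refining the weak order `⪯_B`, and let
`f_B(C) = C ∘ B`.  Then `f_B⁻¹(T_i)` consists exactly of the faces `C` with
`C ≤ T_i` and `C ≰ T_j` for all `j < i`. -/
theorem stmt_14 {V : Type*} [NormedAddCommGroup V] [InnerProductSpace ℝ V]
    [FiniteDimensional ℝ V] {E : Type*} [Fintype E] [DecidableEq E]
    (α : E → V) (B : E → SignType)
    (hBface : IsFaceVec α B) (hBch : ∀ e, B e ≠ 0)
    {r : ℕ} (hr : 0 < r) (T : Fin r → (E → SignType))
    (hTch : ∀ i, IsFaceVec α (T i) ∧ ∀ e, T i e ≠ 0)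
    (hTall : ∀ τ : E → SignType, IsFaceVec α τ → (∀ e, τ e ≠ 0) → ∃! i, T i = τ)
    (hT0 : T ⟨0, hr⟩ = B)
    (hTlast : T ⟨r - 1, by omega⟩ = fun e => -(B e))
    (hrefine : ∀ i j : Fin r, sepSet B (T i) ⊆ sepSet B (T j) → i ≤ j) :
    ∀ (i : Fin r) (σ : E → SignType), IsFaceVec α σ →
      (vComp σ B = T i ↔ (vLE σ (T i) ∧ ∀ j, j < i → ¬ vLE σ (T j))) := by
  
  intro i σ hσ
  constructor
  · intro hcomp
    refine ⟨hcomp ▸ vLE_comp σ B, fun j hj hle => ?_⟩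
    have := hrefine i j (by rw [← hcomp]; exact sep_comp_subset hBch hle)
    exact absurd this (not_le.mpr hj)
  · rintro ⟨hle, hnle⟩
    have hcf : IsFaceVec α (vComp σ B) := isFace_comp hσ hBface
    have hcch : ∀ e, vComp σ B e ≠ 0 := by
      intro e; by_cases h : σ e = 0 <;> simp [vComp, h, hBch e]
    obtain ⟨k, hk, -⟩ := hTall (vComp σ B) hcf hcch
    have hik : i ≤ k := by
      by_contra h
      exact hnle k (not_le.mp h) (hk ▸ vLE_comp σ B)
    have hki : k ≤ i := hrefine k i (by rw [hk]; exact sep_comp_subset hBch hle)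
    rw [← hk, le_antisymm hik hki]
end

section
/- Let 𝓗 be a finite central hyperplane arrangement satisfying the acuteness condition (A). Let T, T' be chambers with separation set S(T,T') = {e} (a single hyperplane H_{α_e}), with T' ⊆ {x : (α_e, x) < 0} and (α_e, λ) ≥ 0 for some λ ∈ V. If T' ⊆ {x : (λ,x) ≥ 0}, then T ⊆ {x : (λ,x) ≥ 0}. -/
open scoped InnerProductSpace Pointwise

/-- assume the arrangement satisfies the acuteness Condition (A)
(for every chamber `T` and hyperplane `H_{α_e}` meeting `closure T` in a facet
`S`, the chamber lies in `relint S + ℝ_{>0} α_e` resp. `relint S + ℝ_{<0} α_e`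
according to its side).  If `T = faceOf α x` and `T' = faceOf α x'` are chambers
with separation set `S(T,T') = {e}`, with `T` on the positive and `T'` on the
negative side of `H_{α_e}`, and `(α_e, λ) ≥ 0`, then
`T' ⊆ {(λ,·) ≥ 0}` implies `T ⊆ {(λ,·) ≥ 0}`. -/
theorem stmt_15 {V : Type*} [NormedAddCommGroup V] [InnerProductSpace ℝ V]
    [FiniteDimensional ℝ V] {E : Type*} [Fintype E]
    (α : E → V) (lam : V)
    (condA : ∀ x : V, (∀ e, ⟪α e, x⟫_ℝ ≠ 0) → ∀ e : E,
      Set.finrank ℝ (closure (faceOf α x) ∩ {y | ⟪α e, y⟫_ℝ = 0})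
          = Module.finrank ℝ V - 1 →
      ((faceOf α x ⊆ {y | 0 < ⟪α e, y⟫_ℝ} →
          faceOf α x ⊆ intrinsicInterior ℝ (closure (faceOf α x) ∩ {y | ⟪α e, y⟫_ℝ = 0})
            + {y | ∃ t : ℝ, 0 < t ∧ y = t • α e}) ∧
        (faceOf α x ⊆ {y | ⟪α e, y⟫_ℝ < 0} →
          faceOf α x ⊆ intrinsicInterior ℝ (closure (faceOf α x) ∩ {y | ⟪α e, y⟫_ℝ = 0})
            + {y | ∃ t : ℝ, t < 0 ∧ y = t • α e})))
    (x x' : V) (hx : ∀ e, ⟪α e, x⟫_ℝ ≠ 0) (hx' : ∀ e, ⟪α e, x'⟫_ℝ ≠ 0)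
    (e : E)
    (hsep : ∀ f, f ≠ e → SignType.sign ⟪α f, x⟫_ℝ = SignType.sign ⟪α f, x'⟫_ℝ)
    (hTpos : 0 < ⟪α e, x⟫_ℝ) (hT'neg : ⟪α e, x'⟫_ℝ < 0)
    (hlam : 0 ≤ ⟪α e, lam⟫_ℝ)
    (hT' : faceOf α x' ⊆ {y | 0 ≤ ⟪lam, y⟫_ℝ}) :
    faceOf α x ⊆ {y | 0 ≤ ⟪lam, y⟫_ℝ} := by
  have hcont : ∀ f : E, Continuous fun z : V => ⟪α f, z⟫_ℝ :=
    fun f => Continuous.inner continuous_const continuous_id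
  -- the open set of points having the same signs as x away from e
  have hUopen : IsOpen {z : V | ∀ f, f ≠ e → SignType.sign ⟪α f, z⟫_ℝ = SignType.sign ⟪α f, x⟫_ℝ} := by
    have : {z : V | ∀ f, f ≠ e → SignType.sign ⟪α f, z⟫_ℝ = SignType.sign ⟪α f, x⟫_ℝ}
        = ⋂ f : E, {z : V | f ≠ e → SignType.sign ⟪α f, z⟫_ℝ = SignType.sign ⟪α f, x⟫_ℝ} := by
      ext z; simp [Set.mem_iInter]
    rw [this]
    refine isOpen_iInter_of_finite fun f => ?_
    by_cases hf : f = e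
    · simp [hf]
    · have h1 : {z : V | f ≠ e → SignType.sign ⟪α f, z⟫_ℝ = SignType.sign ⟪α f, x⟫_ℝ}
          = {z : V | SignType.sign ⟪α f, z⟫_ℝ = SignType.sign ⟪α f, x⟫_ℝ} := by
        ext z; simp [hf]
      rw [h1]
      rcases (hx f).lt_or_gt with hneg | hpos
      · have h2 : {z : V | SignType.sign ⟪α f, z⟫_ℝ = SignType.sign ⟪α f, x⟫_ℝ}
            = {z : V | ⟪α f, z⟫_ℝ < 0} := by
          ext z; rw [Set.mem_setOf_eq, sign_neg hneg, sign_eq_neg_one_iff]; rfl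
        rw [h2]; exact isOpen_lt (hcont f) continuous_const
      · have h2 : {z : V | SignType.sign ⟪α f, z⟫_ℝ = SignType.sign ⟪α f, x⟫_ℝ}
            = {z : V | 0 < ⟪α f, z⟫_ℝ} := by
          ext z; rw [Set.mem_setOf_eq, sign_pos hpos, sign_eq_one_iff]; rfl
        rw [h2]; exact isOpen_lt continuous_const (hcont f)
  -- weak sign inequalities on the closure of T
  have hclos_le : ∀ f : E, ⟪α f, x⟫_ℝ < 0 → ∀ s ∈ closure (faceOf α x), ⟪α f, s⟫_ℝ ≤ 0 := by
    intro f hf s hs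
    have hsub : faceOf α x ⊆ {z : V | ⟪α f, z⟫_ℝ ≤ 0} := by
      intro z hz
      have := hz f
      rw [sign_neg hf, sign_eq_neg_one_iff] at this
      exact this.le
    exact closure_minimal hsub (isClosed_le (hcont f) continuous_const) hs
  have hclos_ge : ∀ f : E, 0 < ⟪α f, x⟫_ℝ → ∀ s ∈ closure (faceOf α x), 0 ≤ ⟪α f, s⟫_ℝ := by
    intro f hf s hs
    have hsub : faceOf α x ⊆ {z : V | 0 ≤ ⟪α f, z⟫_ℝ} := by
      intro z hz
      have := hz f
      rw [sign_pos hf, sign_eq_one_iff] at this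
      exact this.le
    exact closure_minimal hsub (isClosed_le continuous_const (hcont f)) hs
  -- key claim: lam is nonnegative on closure T ∩ H_e
  have hstar : ∀ s, s ∈ closure (faceOf α x) → ⟪α e, s⟫_ℝ = 0 → 0 ≤ ⟪lam, s⟫_ℝ := by
    intro s hs hse
    have key : ∀ δ : ℝ, 0 < δ → δ ≤ 1 → 0 ≤ ⟪lam, s + δ • (x' - s)⟫_ℝ := by
      intro δ hδ hδ1
      refine hT' ?_
      intro f
      rcases eq_or_ne f e with rfl | hf
      · have hval : ⟪α f, s + δ • (x' - s)⟫_ℝ = δ * ⟪α f, x'⟫_ℝ := by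
          rw [inner_add_right, real_inner_smul_right, inner_sub_right, hse]; ring
        have : ⟪α f, s + δ • (x' - s)⟫_ℝ < 0 := by
          rw [hval]; exact mul_neg_of_pos_of_neg hδ hT'neg
        rw [sign_neg this, sign_neg hT'neg]
      · have hsign := hsep f hf
        have hval : ⟪α f, s + δ • (x' - s)⟫_ℝ = (1 - δ) * ⟪α f, s⟫_ℝ + δ * ⟪α f, x'⟫_ℝ := by
          rw [inner_add_right, real_inner_smul_right, inner_sub_right]; ring
        rcases (hx f).lt_or_gt with hneg | hpos
        · have hx'f : ⟪α f, x'⟫_ℝ < 0 := by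
            rw [sign_neg hneg] at hsign
            exact sign_eq_neg_one_iff.mp hsign.symm
          have hsle := hclos_le f hneg s hs
          have : ⟪α f, s + δ • (x' - s)⟫_ℝ < 0 := by rw [hval]; nlinarith
          rw [sign_neg this, sign_neg hx'f]
        · have hx'f : 0 < ⟪α f, x'⟫_ℝ := by
            rw [sign_pos hpos] at hsign
            exact sign_eq_one_iff.mp hsign.symm
          have hsge := hclos_ge f hpos s hs
          have : 0 < ⟪α f, s + δ • (x' - s)⟫_ℝ := by rw [hval]; nlinarith
          rw [sign_pos this, sign_pos hx'f]
    have htend : Filter.Tendsto (fun δ : ℝ => ⟪lam, s + δ • (x' - s)⟫_ℝ)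
        (nhdsWithin 0 (Set.Ioi 0)) (nhds ⟪lam, s⟫_ℝ) := by
      have hc : Continuous fun δ : ℝ => ⟪lam, s + δ • (x' - s)⟫_ℝ :=
        Continuous.inner continuous_const (continuous_const.add (continuous_id.smul continuous_const))
      refine Filter.Tendsto.mono_left ?_ nhdsWithin_le_nhds
      simpa using hc.tendsto 0
    refine ge_of_tendsto htend ?_
    filter_upwards [Ioc_mem_nhdsGT_of_mem (Set.left_mem_Ico.mpr one_pos)] with δ hδ
    exact key δ hδ.1 hδ.2
  -- the crossing point w on the segment [x, x']
  have hαe : α e ≠ 0 := by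
    intro h; rw [h, inner_zero_left] at hTpos; exact lt_irrefl 0 hTpos
  have hab : (0:ℝ) < ⟪α e, x⟫_ℝ - ⟪α e, x'⟫_ℝ := by linarith
  obtain ⟨t₀, ht₀pos, ht₀lt, hwe0⟩ :
      ∃ t₀ : ℝ, 0 < t₀ ∧ t₀ < 1 ∧ ⟪α e, x⟫_ℝ + t₀ * (⟪α e, x'⟫_ℝ - ⟪α e, x⟫_ℝ) = 0 := by
    refine ⟨⟪α e, x⟫_ℝ / (⟪α e, x⟫_ℝ - ⟪α e, x'⟫_ℝ), div_pos hTpos hab, ?_, ?_⟩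
    · rw [div_lt_one hab]; linarith
    · field_simp; ring
  set w : V := x + t₀ • (x' - x) with hw
  have hwe : ⟪α e, w⟫_ℝ = 0 := by
    rw [hw, inner_add_right, real_inner_smul_right, inner_sub_right]
    exact hwe0
  have hwU : ∀ f, f ≠ e → SignType.sign ⟪α f, w⟫_ℝ = SignType.sign ⟪α f, x⟫_ℝ := by
    intro f hf
    have hsign := hsep f hf
    have hval : ⟪α f, w⟫_ℝ = (1 - t₀) * ⟪α f, x⟫_ℝ + t₀ * ⟪α f, x'⟫_ℝ := by
      rw [hw, inner_add_right, real_inner_smul_right, inner_sub_right]; ring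
    rcases (hx f).lt_or_gt with hneg | hpos
    · have hx'f : ⟪α f, x'⟫_ℝ < 0 := by
        rw [sign_neg hneg] at hsign
        exact sign_eq_neg_one_iff.mp hsign.symm
      have : ⟪α f, w⟫_ℝ < 0 := by rw [hval]; nlinarith
      rw [sign_neg this, sign_neg hneg]
    · have hx'f : 0 < ⟪α f, x'⟫_ℝ := by
        rw [sign_pos hpos] at hsign
        exact sign_eq_one_iff.mp hsign.symm
      have : 0 < ⟪α f, w⟫_ℝ := by rw [hval]; nlinarith
      rw [sign_pos this, sign_pos hpos]
  -- points in U ∩ H_e are in closure T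
  have hUclos : ∀ u : V, (∀ f, f ≠ e → SignType.sign ⟪α f, u⟫_ℝ = SignType.sign ⟪α f, x⟫_ℝ) →
      ⟪α e, u⟫_ℝ = 0 → u ∈ closure (faceOf α x) := by
    intro u hu hue
    have htend : Filter.Tendsto (fun δ : ℝ => u + δ • α e)
        (nhdsWithin 0 (Set.Ioi 0)) (nhds u) := by
      have hc : Continuous fun δ : ℝ => u + δ • α e :=
        continuous_const.add (continuous_id.smul continuous_const)
      refine Filter.Tendsto.mono_left ?_ nhdsWithin_le_nhds
      simpa using hc.tendsto 0
    refine mem_closure_of_tendsto htend ?_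
    have hevU : ∀ᶠ δ : ℝ in nhdsWithin 0 (Set.Ioi 0),
        (u + δ • α e) ∈ {z : V | ∀ f, f ≠ e → SignType.sign ⟪α f, z⟫_ℝ = SignType.sign ⟪α f, x⟫_ℝ} :=
      htend.eventually (hUopen.mem_nhds hu)
    filter_upwards [hevU, self_mem_nhdsWithin] with δ hδU (hδpos : δ ∈ Set.Ioi 0)
    intro f
    rcases eq_or_ne f e with rfl | hf
    · have : ⟪α f, u + δ • α f⟫_ℝ = δ * ‖α f‖ ^ 2 := by
        rw [inner_add_right, real_inner_smul_right, hue, real_inner_self_eq_norm_sq]; ring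
      have hpos' : 0 < ⟪α f, u + δ • α f⟫_ℝ := by
        rw [this]
        exact mul_pos hδpos (pow_pos (norm_pos_iff.mpr hαe) 2)
      rw [sign_pos hpos', sign_pos hTpos]
    · exact hδU f hf
  have hwclos : w ∈ closure (faceOf α x) := hUclos w hwU hwe
  -- the facet condition
  have hfacet : Set.finrank ℝ (closure (faceOf α x) ∩ {y | ⟪α e, y⟫_ℝ = 0})
      = Module.finrank ℝ V - 1 := by
    set φ : V →ₗ[ℝ] ℝ := (innerSL ℝ (α e) : V →L[ℝ] ℝ).toLinearMap with hφ
    have hφapp : ∀ z : V, φ z = ⟪α e, z⟫_ℝ := fun z => rfl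
    have hker : Submodule.span ℝ (closure (faceOf α x) ∩ {y | ⟪α e, y⟫_ℝ = 0})
        = LinearMap.ker φ := by
      apply le_antisymm
      · rw [Submodule.span_le]
        rintro z ⟨-, hz2⟩
        simpa [LinearMap.mem_ker, hφapp] using hz2
      · intro h hh
        rw [LinearMap.mem_ker, hφapp] at hh
        -- find δ > 0 with w + δ • h still in U
        have htend : Filter.Tendsto (fun δ : ℝ => w + δ • h)
            (nhdsWithin 0 (Set.Ioi 0)) (nhds w) := by
          have hc : Continuous fun δ : ℝ => w + δ • h :=
            continuous_const.add (continuous_id.smul continuous_const)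
          refine Filter.Tendsto.mono_left ?_ nhdsWithin_le_nhds
          simpa using hc.tendsto 0
        have hev : ∀ᶠ δ : ℝ in nhdsWithin 0 (Set.Ioi 0),
            (w + δ • h) ∈ {z : V | ∀ f, f ≠ e → SignType.sign ⟪α f, z⟫_ℝ = SignType.sign ⟪α f, x⟫_ℝ} :=
          htend.eventually (hUopen.mem_nhds hwU)
        obtain ⟨δ, hδU, hδpos⟩ := (hev.and self_mem_nhdsWithin).exists
        have hδpos : (0:ℝ) < δ := hδpos
        have hmem1 : w ∈ closure (faceOf α x) ∩ {y | ⟪α e, y⟫_ℝ = 0} := ⟨hwclos, hwe⟩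
        have hwδe : ⟪α e, w + δ • h⟫_ℝ = 0 := by
          rw [inner_add_right, real_inner_smul_right, hwe, hh]; ring
        have hmem2 : w + δ • h ∈ closure (faceOf α x) ∩ {y | ⟪α e, y⟫_ℝ = 0} :=
          ⟨hUclos _ hδU hwδe, hwδe⟩
        have : h = δ⁻¹ • ((w + δ • h) - w) := by
          rw [add_sub_cancel_left, smul_smul, inv_mul_cancel₀ (ne_of_gt hδpos), one_smul]
        rw [this]
        exact Submodule.smul_mem _ _
          (Submodule.sub_mem _ (Submodule.subset_span hmem2) (Submodule.subset_span hmem1))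
    have hφsurj : Function.Surjective φ := by
      intro c
      refine ⟨(c / ⟪α e, x⟫_ℝ) • x, ?_⟩
      rw [hφapp, real_inner_smul_right]
      field_simp
    have hrange : LinearMap.range φ = ⊤ := LinearMap.range_eq_top.mpr hφsurj
    have hdim := LinearMap.finrank_range_add_finrank_ker φ
    rw [hrange] at hdim
    have h1 : Module.finrank ℝ (⊤ : Submodule ℝ ℝ) = 1 := by
      rw [finrank_top]; exact Module.finrank_self ℝ
    rw [h1] at hdim
    rw [Set.finrank, hker]
    omega
  -- apply Condition (A)
  obtain ⟨hA, -⟩ := condA x hx e hfacet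
  have hTpos' : faceOf α x ⊆ {z : V | 0 < ⟪α e, z⟫_ℝ} := by
    intro z hz
    have := hz e
    rw [sign_pos hTpos, sign_eq_one_iff] at this
    exact this
  intro y hy
  obtain ⟨p, hp, q, ⟨t, ht, rfl⟩, rfl⟩ := Set.mem_add.mp (hA hTpos' hy)
  obtain ⟨hpclos, hpe⟩ := intrinsicInterior_subset hp
  have h1 : 0 ≤ ⟪lam, p⟫_ℝ := hstar p hpclos hpe
  have h2 : 0 ≤ ⟪lam, t • α e⟫_ℝ := by
    rw [real_inner_smul_right, real_inner_comm]
    exact mul_nonneg ht.le hlam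
  show 0 ≤ ⟪lam, p + t • α e⟫_ℝ
  rw [inner_add_right]
  linarith
end
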